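/- arXiv:1911.12009 — 2 statements merged into one kernel-verified Lean document; each statement's English description precedes it below -/
import Mathlib

section
/- Let n be even and z ∈ S_n a fixed-point-free involution. A word a_1⋯a_l is an fpf-involution word for z (i.e., a minimal-length word with z = s_{a_l}⋯s_{a_1}·1^fpf_n·s_{a_1}⋯s_{a_l} under ordinary conjugation) if and only if the word 1,3,5,…,(n−1),a_1,…,a_l is an involution word for z. -/
open Equiv

/-- The simple transposition `s_a` of `Fin n` (swapping `a` and `a+1`, `0`-indexed);
the identity when `a` is out of range. -/
def sTr (n : ℕ) (a : ℕ) : Equiv.Perm (Fin n) :=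
  if h : a + 1 < n then Equiv.swap ⟨a, Nat.lt_of_succ_lt h⟩ ⟨a + 1, h⟩ else 1

/-- The product `s_{a_1} s_{a_2} ⋯ s_{a_l}` of the simple transpositions in a word. -/
def wordProd (n : ℕ) (l : List ℕ) : Equiv.Perm (Fin n) :=
  (l.map (sTr n)).prod

/-- A word whose letters are all valid indices of simple transpositions of `S_n`. -/
def IsWord (n : ℕ) (l : List ℕ) : Prop := ∀ a ∈ l, a + 1 < n

/-- The Coxeter length of a permutation: the minimal length of a word in the simple
transpositions expressing it. -/
noncomputable def len (n : ℕ) (w : Equiv.Perm (Fin n)) : ℕ :=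
  sInf {k | ∃ l : List ℕ, IsWord n l ∧ wordProd n l = w ∧ l.length = k}

/-- `l` is a reduced word for `w`: a minimal-length word with product `w`. -/
def IsReducedWord (n : ℕ) (l : List ℕ) (w : Equiv.Perm (Fin n)) : Prop :=
  IsWord n l ∧ wordProd n l = w ∧
    ∀ l' : List ℕ, IsWord n l' → wordProd n l' = w → l.length ≤ l'.length

/-- One step of the Demazure (0-Hecke) product: `u ∘ s_a = u s_a` if the length
increases, and `u` otherwise. -/
noncomputable def demStep (n : ℕ) (u : Equiv.Perm (Fin n)) (a : ℕ) : Equiv.Perm (Fin n) :=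
  if len n (u * sTr n a) = len n u + 1 then u * sTr n a else u

/-- The Demazure product `s_{a_1} ∘ s_{a_2} ∘ ⋯ ∘ s_{a_l}` of a word. -/
noncomputable def demWord (n : ℕ) (l : List ℕ) : Equiv.Perm (Fin n) :=
  l.foldl (demStep n) 1

/-- A choice of reduced word for each permutation. -/
noncomputable def redWord (n : ℕ) (w : Equiv.Perm (Fin n)) : List ℕ := by
  classical
  exact if h : ∃ l, IsReducedWord n l w then h.choose else []

/-- The Demazure product `v ∘ w` of two permutations: the Demazure product of the
concatenation of reduced words for `v` and for `w`. -/
noncomputable def dem (n : ℕ) (v w : Equiv.Perm (Fin n)) : Equiv.Perm (Fin n) :=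
  demWord n (redWord n v ++ redWord n w)

/-- `s_{a_l} ∘ ⋯ ∘ s_{a_1} ∘ 1 ∘ s_{a_1} ∘ ⋯ ∘ s_{a_l}`, the involution-word product. -/
noncomputable def invWordProd (n : ℕ) (l : List ℕ) : Equiv.Perm (Fin n) :=
  demWord n (l.reverse ++ l)

/-- `l` is an involution word for `y`: a minimal-length word with
`y = s_{a_l} ∘ ⋯ ∘ s_{a_1} ∘ 1 ∘ s_{a_1} ∘ ⋯ ∘ s_{a_l}`. -/
def IsInvWord (n : ℕ) (l : List ℕ) (y : Equiv.Perm (Fin n)) : Prop :=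
  IsWord n l ∧ invWordProd n l = y ∧
    ∀ l' : List ℕ, IsWord n l' → invWordProd n l' = y → l.length ≤ l'.length

/-- `w` is an atom for `y`: a minimal-length permutation with `y = w⁻¹ ∘ w`
(Demazure product). -/
def IsAtomOf (n : ℕ) (w y : Equiv.Perm (Fin n)) : Prop :=
  dem n w⁻¹ w = y ∧ ∀ v : Equiv.Perm (Fin n), dem n v⁻¹ v = y → len n w ≤ len n v

/-- The word `1, 3, 5, …, (n-1)` (in `1`-indexed terms), i.e. `0,2,4,…` `0`-indexed. -/
def fpfBase (n : ℕ) : List ℕ := (List.range (n / 2)).map (fun i => 2 * i)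

/-- The minimal fixed-point-free involution `1^fpf_n = s_1 s_3 ⋯ s_{n-1}`. -/
def onefpf (n : ℕ) : Equiv.Perm (Fin n) := wordProd n (fpfBase n)

/-- `s_{a_l} ⋯ s_{a_1} · 1^fpf_n · s_{a_1} ⋯ s_{a_l}` (ordinary products). -/
def conjWordProd (n : ℕ) (l : List ℕ) : Equiv.Perm (Fin n) :=
  wordProd n l.reverse * onefpf n * wordProd n l

/-- `l` is an fpf-involution word for `z`. -/
def IsFpfInvWord (n : ℕ) (l : List ℕ) (z : Equiv.Perm (Fin n)) : Prop :=
  IsWord n l ∧ conjWordProd n l = z ∧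
    ∀ l' : List ℕ, IsWord n l' → conjWordProd n l' = z → l.length ≤ l'.length

/-- `w` is an fpf-atom for `z`: a minimal-length permutation with `z = w⁻¹ · 1^fpf_n · w`. -/
def IsFpfAtomOf (n : ℕ) (w z : Equiv.Perm (Fin n)) : Prop :=
  w⁻¹ * onefpf n * w = z ∧
    ∀ v : Equiv.Perm (Fin n), v⁻¹ * onefpf n * v = z → len n w ≤ len n v

/-- Bruhat order on `S_n`: generated by `u < u t` for transpositions `t` that
increase length. -/
def BruhatLE (n : ℕ) (u w : Equiv.Perm (Fin n)) : Prop :=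
  Relation.ReflTransGen
    (fun x y => len n x < len n y ∧ ∃ t : Equiv.Perm (Fin n), Equiv.Perm.IsSwap t ∧ y = x * t)
    u w

/-- The Rothe diagram `D(w) = {(i,j) : w(i) > j, w⁻¹(j) > i}` (`0`-indexed). -/
def rothe (n : ℕ) (w : Equiv.Perm (Fin n)) : Finset (Fin n × Fin n) :=
  Finset.univ.filter (fun p => p.2 < w p.1 ∧ p.1 < w⁻¹ p.2)

/-- The number of inversions of a permutation. -/
def invNum (n : ℕ) (w : Equiv.Perm (Fin n)) : ℕ :=
  (Finset.univ.filter (fun p : Fin n × Fin n => p.1 < p.2 ∧ w p.2 < w p.1)).card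

/-- The transpose of a finite diagram. -/
def trFinset (n : ℕ) (D : Finset (Fin n × Fin n)) : Finset (Fin n × Fin n) :=
  D.image (fun p => (p.2, p.1))

/-- The transpose of a diagram (as a set). -/
def trSet {n : ℕ} (D : Set (Fin n × Fin n)) : Set (Fin n × Fin n) :=
  {p | (p.2, p.1) ∈ D}

/-- The northwest partial order: `(i,j) ≤ (i',j')` iff `i ≤ i'` and `j ≤ j'`. -/
def NWle {n : ℕ} (p q : Fin n × Fin n) : Prop := p.1 ≤ q.1 ∧ p.2 ≤ q.2

/-- A lower set for the northwest order (i.e., a Ferrers/partition diagram). -/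
def IsLowerNW {n : ℕ} (S : Set (Fin n × Fin n)) : Prop :=
  ∀ p q : Fin n × Fin n, NWle p q → q ∈ S → p ∈ S

/-- The dominant component of a diagram: the union of all `≤_NW`-lower sets
contained in it. -/
def domComp {n : ℕ} (D : Set (Fin n × Fin n)) : Set (Fin n × Fin n) :=
  ⋃₀ {S | IsLowerNW S ∧ S ⊆ D}

/-- The Lehmer code `c_i(w)`: the number of cells of the Rothe diagram in row `i`. -/
def code (n : ℕ) (w : Equiv.Perm (Fin n)) (i : Fin n) : ℕ :=
  (Finset.univ.filter (fun j : Fin n => (i, j) ∈ rothe n w)).card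

/-- The involution code `ĉ_i(y)`: the number of `j > i` with `y(i) > y(j)` and
`i ≥ y(j)` (`0`-indexed translation of the `1`-indexed definition). -/
def invCode (n : ℕ) (y : Equiv.Perm (Fin n)) (i : Fin n) : ℕ :=
  (Finset.univ.filter (fun j : Fin n => i < j ∧ y j < y i ∧ y j ≤ i)).card

/-- The fpf-involution code `ĉ^fpf_i(z)`: the number of `j > i` with `z(i) > z(j)`
and `i > z(j)`. -/
def fpfInvCode (n : ℕ) (z : Equiv.Perm (Fin n)) (i : Fin n) : ℕ :=
  (Finset.univ.filter (fun j : Fin n => i < j ∧ z j < z i ∧ z j < i)).card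

/-- The word `b_1 a_1 b_2 a_2 ⋯ b_l a_l` with repeated letters removed, where
`a_1 < ⋯ < a_l` are the `a` with `a ≤ y(a)` and `b_i = y(a_i)`; this is the
one-line notation of `α_min(y)⁻¹`. -/
def amWord (n : ℕ) (y : Equiv.Perm (Fin n)) : List (Fin n) :=
  (((List.finRange n).filter (fun a => a ≤ y a)).flatMap (fun a => [y a, a])).dedup

/-- The standard reading word of a diagram: read rows top to bottom, each row right
to left, recording the (`0`-indexed) antidiagonal index `i+j` of each cell. -/
def readWord (n : ℕ) (D : Finset (Fin n × Fin n)) : List ℕ :=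
  (List.finRange n).flatMap (fun i =>
    ((List.finRange n).reverse.filter (fun j => (i, j) ∈ D)).map
      (fun j => (i : ℕ) + (j : ℕ)))

/-- `D` is a reduced pipe dream for `w`: a subset of the staircase
`{(i,j) : i + j ≤ n}` (`1`-indexed) whose standard reading word is a reduced word
for `w`. -/
def IsPipeDream (n : ℕ) (D : Finset (Fin n × Fin n)) (w : Equiv.Perm (Fin n)) : Prop :=
  (∀ p ∈ D, (p.1 : ℕ) + (p.2 : ℕ) + 2 ≤ n) ∧ IsReducedWord n (readWord n D) w

-- ### sTr basics

lemma sTr_apply {n a : ℕ} (h : a + 1 < n) (x : Fin n) :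
    ((sTr n a x : Fin n) : ℕ) = if (x : ℕ) = a then a + 1 else if (x : ℕ) = a + 1 then a else x := by
  simp only [sTr, dif_pos h]
  rcases eq_or_ne (x : ℕ) a with hx | hx
  · have : x = ⟨a, Nat.lt_of_succ_lt h⟩ := Fin.ext hx
    subst this; simp [Equiv.swap_apply_left]
  rcases eq_or_ne (x : ℕ) (a+1) with hx' | hx'
  · have : x = ⟨a+1, h⟩ := Fin.ext hx'
    subst this; rw [Equiv.swap_apply_right]; simp [Ne.symm hx]
  · rw [Equiv.swap_apply_of_ne_of_ne]
    · simp [hx, hx']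
    · exact fun hc => hx (by simpa using congrArg Fin.val hc)
    · exact fun hc => hx' (by simpa using congrArg Fin.val hc)

lemma sTr_invalid {n a : ℕ} (h : ¬ a + 1 < n) : sTr n a = 1 := by simp [sTr, h]

lemma sTr_mul_self (n a : ℕ) : sTr n a * sTr n a = 1 := by
  unfold sTr; split
  · exact Equiv.swap_mul_self _ _
  · simp

lemma sTr_inv (n a : ℕ) : (sTr n a)⁻¹ = sTr n a := by
  rw [inv_eq_iff_mul_eq_one, sTr_mul_self]

lemma sTr_sTr {n a : ℕ} (x : Fin n) : sTr n a (sTr n a x) = x := by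
  have := congrFun (congrArg (fun e : Equiv.Perm (Fin n) => (e : Fin n → Fin n)) (sTr_mul_self n a)) x
  simpa using this

lemma sTr_lt_sTr {n a : ℕ} (h : a + 1 < n) {i j : Fin n} (hij : i < j)
    (hne : ¬((i : ℕ) = a ∧ (j : ℕ) = a + 1)) : sTr n a i < sTr n a j := by
  have hi := sTr_apply h i; have hj := sTr_apply h j
  rw [Fin.lt_def] at *
  split_ifs at hi hj <;> omega

lemma invNum_mul_sTr_asc {n a : ℕ} (h : a + 1 < n) {w : Equiv.Perm (Fin n)}
    (hasc : w ⟨a, Nat.lt_of_succ_lt h⟩ < w ⟨a + 1, h⟩) :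
    invNum n (w * sTr n a) = invNum n w + 1 := by
  classical
  set A : Fin n := ⟨a, Nat.lt_of_succ_lt h⟩
  set A1 : Fin n := ⟨a + 1, h⟩
  have hAA1 : A < A1 := by simp [A, A1, Fin.lt_def]
  have hsA : sTr n a A = A1 := by apply Fin.ext; rw [sTr_apply h]; simp [A, A1]
  have hsA1 : sTr n a A1 = A := by apply Fin.ext; rw [sTr_apply h]; simp [A, A1]
  set s := sTr n a
  set I1 := Finset.univ.filter (fun p : Fin n × Fin n => p.1 < p.2 ∧ (w * s) p.2 < (w * s) p.1) with hI1
  set I2 := Finset.univ.filter (fun p : Fin n × Fin n => p.1 < p.2 ∧ w p.2 < w p.1) with hI2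
  have hx1 : (A, A1) ∈ I1 := by
    simp only [hI1, Finset.mem_filter, Finset.mem_univ, true_and]
    refine ⟨hAA1, ?_⟩
    simpa [Equiv.Perm.mul_apply, hsA, hsA1, s] using hasc
  have hx2 : (A, A1) ∉ I2 := by
    simp only [hI2, Finset.mem_filter, Finset.mem_univ, true_and]
    rintro ⟨-, hlt⟩; exact absurd hasc (not_lt.2 hlt.le)
  have hmap : ∀ p : Fin n × Fin n, p ∈ I1.erase (A, A1) → ((s p.1, s p.2) : Fin n × Fin n) ∈ I2.erase (A, A1) := by
    rintro ⟨i, j⟩ hp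
    simp only [Finset.mem_erase, hI1, Finset.mem_filter, Finset.mem_univ, true_and] at hp
    obtain ⟨hne, hij, hval⟩ := hp
    have hne' : ¬((i : ℕ) = a ∧ (j : ℕ) = a + 1) := by
      rintro ⟨h1, h2⟩; exact hne (by simp [Prod.ext_iff, A, A1, Fin.ext_iff, h1, h2])
    have hlt : s i < s j := sTr_lt_sTr h hij hne'
    simp only [Finset.mem_erase, hI2, Finset.mem_filter, Finset.mem_univ, true_and]
    refine ⟨?_, hlt, by simpa [Equiv.Perm.mul_apply] using hval⟩
    rintro hc
    rw [Prod.ext_iff] at hc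
    have e1 : i = A1 := by
      have := congrArg s hc.1; rwa [sTr_sTr, hsA] at this
    have e2 : j = A := by
      have := congrArg s hc.2; rwa [sTr_sTr, hsA1] at this
    rw [e1, e2] at hij
    exact absurd hij (not_lt.2 hAA1.le)
  have hmap2 : ∀ p : Fin n × Fin n, p ∈ I2.erase (A, A1) → ((s p.1, s p.2) : Fin n × Fin n) ∈ I1.erase (A, A1) := by
    rintro ⟨i, j⟩ hp
    simp only [Finset.mem_erase, hI2, Finset.mem_filter, Finset.mem_univ, true_and] at hp
    obtain ⟨hne, hij, hval⟩ := hp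
    have hne' : ¬((i : ℕ) = a ∧ (j : ℕ) = a + 1) := by
      rintro ⟨h1, h2⟩; exact hne (by simp [Prod.ext_iff, A, A1, Fin.ext_iff, h1, h2])
    have hlt : s i < s j := sTr_lt_sTr h hij hne'
    simp only [Finset.mem_erase, hI1, Finset.mem_filter, Finset.mem_univ, true_and]
    refine ⟨?_, hlt, by simpa [Equiv.Perm.mul_apply, sTr_sTr, s] using hval⟩
    rintro hc
    rw [Prod.ext_iff] at hc
    have e1 : i = A1 := by
      have := congrArg s hc.1; rwa [sTr_sTr, hsA] at this
    have e2 : j = A := by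
      have := congrArg s hc.2; rwa [sTr_sTr, hsA1] at this
    rw [e1, e2] at hij
    exact absurd hij (not_lt.2 hAA1.le)
  have hcards : (I1.erase (A, A1)).card = (I2.erase (A, A1)).card := by
    apply Finset.card_bij' (fun p _ => (s p.1, s p.2)) (fun p _ => (s p.1, s p.2)) hmap hmap2
    · intro p _; simp [sTr_sTr, s]
    · intro p _; simp [sTr_sTr, s]
  have h1 : I1.card = (I1.erase (A, A1)).card + 1 := by
    rw [Finset.card_erase_of_mem hx1]
    have : 0 < I1.card := Finset.card_pos.2 ⟨_, hx1⟩
    omega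
  have h2 : (I2.erase (A, A1)).card = I2.card := by
    rw [Finset.erase_eq_of_notMem hx2]
  show I1.card = I2.card + 1
  omega

lemma invNum_mul_sTr_desc {n a : ℕ} (h : a + 1 < n) {w : Equiv.Perm (Fin n)}
    (hdesc : w ⟨a + 1, h⟩ < w ⟨a, Nat.lt_of_succ_lt h⟩) :
    invNum n w = invNum n (w * sTr n a) + 1 := by
  have hsA : sTr n a ⟨a, Nat.lt_of_succ_lt h⟩ = ⟨a + 1, h⟩ := by
    apply Fin.ext; rw [sTr_apply h]; simp
  have hsA1 : sTr n a ⟨a + 1, h⟩ = ⟨a, Nat.lt_of_succ_lt h⟩ := by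
    apply Fin.ext; rw [sTr_apply h]; simp
  have := invNum_mul_sTr_asc h (w := w * sTr n a)
    (by simpa [Equiv.Perm.mul_apply, hsA, hsA1] using hdesc)
  rwa [mul_assoc, sTr_mul_self, mul_one] at this

-- ### wordProd basics

lemma wordProd_nil (n : ℕ) : wordProd n [] = 1 := rfl

lemma wordProd_append (n : ℕ) (l m : List ℕ) :
    wordProd n (l ++ m) = wordProd n l * wordProd n m := by
  simp [wordProd]

lemma wordProd_singleton (n a : ℕ) : wordProd n [a] = sTr n a := by simp [wordProd]

lemma wordProd_reverse (n : ℕ) (l : List ℕ) :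
    wordProd n l.reverse = (wordProd n l)⁻¹ := by
  induction l with
  | nil => simp [wordProd]
  | cons a l ih =>
      rw [List.reverse_cons, wordProd_append, ih, wordProd_singleton]
      have : wordProd n (a :: l) = sTr n a * wordProd n l := by simp [wordProd]
      rw [this, mul_inv_rev, sTr_inv]

-- ### more invNum

lemma invNum_one (n : ℕ) : invNum n (1 : Equiv.Perm (Fin n)) = 0 := by
  rw [invNum, Finset.card_eq_zero, Finset.filter_eq_empty_iff]
  rintro p -
  simp only [Equiv.Perm.one_apply]
  rintro ⟨h1, h2⟩
  exact absurd h1 (not_lt.2 h2.le)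

lemma exists_descent {n : ℕ} {w : Equiv.Perm (Fin n)} (hw : w ≠ 1) :
    ∃ a, ∃ h : a + 1 < n, w ⟨a + 1, h⟩ < w ⟨a, Nat.lt_of_succ_lt h⟩ := by
  by_contra hc
  push_neg at hc
  apply hw
  have hmono : StrictMono w := by
    have hstep : ∀ a, ∀ h : a + 1 < n, w ⟨a, Nat.lt_of_succ_lt h⟩ < w ⟨a + 1, h⟩ := by
      intro a h
      rcases lt_trichotomy (w ⟨a, Nat.lt_of_succ_lt h⟩) (w ⟨a + 1, h⟩) with h1 | h1 | h1
      · exact h1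
      · exact absurd (w.injective h1) (by simp [Fin.ext_iff])
      · exact absurd h1 (not_lt.2 (hc a h))
    intro i j hij
    rcases i with ⟨i, hi⟩; rcases j with ⟨j, hj⟩
    simp only [Fin.lt_def] at hij
    induction j with
    | zero => omega
    | succ k ih =>
        rcases Nat.lt_or_ge i k with h' | h'
        · exact lt_trans (ih (Nat.lt_of_succ_lt hj) h') (hstep k hj)
        · have : i = k := by omega
          subst this
          exact hstep i hj
  have inst : WellFoundedLT (Fin n) := inferInstance
  have hinv : StrictMono (⇑(w⁻¹ : Equiv.Perm (Fin n))) := by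
    intro i j hij
    rcases lt_trichotomy ((w⁻¹ : Equiv.Perm (Fin n)) i) ((w⁻¹ : Equiv.Perm (Fin n)) j) with h' | h' | h'
    · exact h'
    · exact absurd ((w⁻¹ : Equiv.Perm (Fin n)).injective h') hij.ne
    · have := hmono h'
      simp only [Equiv.Perm.inv_def, Equiv.apply_symm_apply] at this
      exact absurd hij (not_lt.2 this.le)
  ext x
  have h1 : x ≤ w x := hmono.le_apply
  have h2 : w x ≤ x := by
    have := hinv.le_apply (x := w x)
    rwa [Equiv.Perm.inv_def, Equiv.symm_apply_apply] at this
  have : w x = x := le_antisymm h2 h1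
  simp [this]

lemma invNum_pos_of_ne_one {n : ℕ} {w : Equiv.Perm (Fin n)} (hw : w ≠ 1) :
    0 < invNum n w := by
  obtain ⟨a, h, hd⟩ := exists_descent hw
  apply Finset.card_pos.2
  exact ⟨(⟨a, Nat.lt_of_succ_lt h⟩, ⟨a + 1, h⟩), by
    simp only [Finset.mem_filter, Finset.mem_univ, true_and]
    exact ⟨by simp [Fin.lt_def], hd⟩⟩

lemma invNum_eq_zero_iff {n : ℕ} {w : Equiv.Perm (Fin n)} : invNum n w = 0 ↔ w = 1 := by
  constructor
  · intro h
    by_contra hw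
    exact absurd h (invNum_pos_of_ne_one hw).ne'
  · rintro rfl; exact invNum_one n

lemma invNum_mul_sTr_le {n a : ℕ} (h : a + 1 < n) (w : Equiv.Perm (Fin n)) :
    invNum n (w * sTr n a) ≤ invNum n w + 1 := by
  rcases lt_trichotomy (w ⟨a, Nat.lt_of_succ_lt h⟩) (w ⟨a + 1, h⟩) with h1 | h1 | h1
  · rw [invNum_mul_sTr_asc h h1]
  · exact absurd (w.injective h1) (by simp [Fin.ext_iff])
  · have := invNum_mul_sTr_desc h h1
    omega

lemma exists_word_invNum {n : ℕ} (w : Equiv.Perm (Fin n)) :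
    ∃ l, IsWord n l ∧ wordProd n l = w ∧ l.length = invNum n w := by
  generalize hk : invNum n w = k
  induction k generalizing w with
  | zero =>
      have : w = 1 := invNum_eq_zero_iff.1 hk
      exact ⟨[], by intro a ha; simp at ha, by simp [this, wordProd_nil], rfl⟩
  | succ k ih =>
      have hw : w ≠ 1 := by
        rintro rfl; rw [invNum_one] at hk; omega
      obtain ⟨a, h, hd⟩ := exists_descent hw
      have hdesc := invNum_mul_sTr_desc h hd
      obtain ⟨l, hl1, hl2, hl3⟩ := ih (w * sTr n a) (by omega)
      refine ⟨l ++ [a], ?_, ?_, ?_⟩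
      · intro b hb
        rcases List.mem_append.1 hb with hb | hb
        · exact hl1 b hb
        · simp at hb; omega
      · rw [wordProd_append, hl2, wordProd_singleton, mul_assoc, sTr_mul_self, mul_one]
      · simp [hl3]

lemma invNum_wordProd_le {n : ℕ} (l : List ℕ) (hl : IsWord n l) :
    invNum n (wordProd n l) ≤ l.length := by
  induction l using List.reverseRecOn with
  | nil => simp [wordProd_nil, invNum_one]
  | append_singleton m a ih =>
      have hm : IsWord n m := fun b hb => hl b (by simp [hb])
      have ha : a + 1 < n := hl a (by simp)
      rw [wordProd_append, wordProd_singleton]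
      have := invNum_mul_sTr_le ha (wordProd n m)
      have := ih hm
      simp only [List.length_append, List.length_singleton]
      omega

lemma len_eq_invNum {n : ℕ} (w : Equiv.Perm (Fin n)) : len n w = invNum n w := by
  have hne : {k | ∃ l : List ℕ, IsWord n l ∧ wordProd n l = w ∧ l.length = k}.Nonempty := by
    obtain ⟨l, h1, h2, h3⟩ := exists_word_invNum w
    exact ⟨invNum n w, l, h1, h2, h3⟩
  apply le_antisymm
  · apply Nat.sInf_le
    obtain ⟨l, h1, h2, h3⟩ := exists_word_invNum w
    exact ⟨l, h1, h2, h3⟩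
  · obtain ⟨l, h1, h2, h3⟩ := Nat.sInf_mem hne
    show invNum n w ≤ sInf {k | ∃ l : List ℕ, IsWord n l ∧ wordProd n l = w ∧ l.length = k}
    rw [← h3, ← h2]
    exact invNum_wordProd_le l h1

lemma invNum_inv {n : ℕ} (w : Equiv.Perm (Fin n)) : invNum n w⁻¹ = invNum n w := by
  classical
  apply Finset.card_bij' (fun p _ => ((w⁻¹ : Equiv.Perm (Fin n)) p.2, (w⁻¹ : Equiv.Perm (Fin n)) p.1))
    (fun p _ => (w p.2, w p.1))
  · rintro ⟨i, j⟩ hp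
    simp only [Finset.mem_filter, Finset.mem_univ, true_and] at hp ⊢
    exact ⟨hp.2, by simpa using hp.1⟩
  · rintro ⟨i, j⟩ hp
    simp only [Finset.mem_filter, Finset.mem_univ, true_and] at hp ⊢
    exact ⟨hp.2, by simpa using hp.1⟩
  · rintro ⟨i, j⟩ _; simp
  · rintro ⟨i, j⟩ _; simp

lemma len_inv {n : ℕ} (w : Equiv.Perm (Fin n)) : len n w⁻¹ = len n w := by
  rw [len_eq_invNum, len_eq_invNum, invNum_inv]

lemma len_one (n : ℕ) : len n (1 : Equiv.Perm (Fin n)) = 0 := by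
  rw [len_eq_invNum, invNum_one]

lemma len_asc_iff {n a : ℕ} (h : a + 1 < n) (w : Equiv.Perm (Fin n)) :
    len n (w * sTr n a) = len n w + 1 ↔ w ⟨a, Nat.lt_of_succ_lt h⟩ < w ⟨a + 1, h⟩ := by
  rw [len_eq_invNum, len_eq_invNum]
  constructor
  · intro hl
    rcases lt_trichotomy (w ⟨a, Nat.lt_of_succ_lt h⟩) (w ⟨a + 1, h⟩) with h1 | h1 | h1
    · exact h1
    · exact absurd (w.injective h1) (by simp [Fin.ext_iff])
    · have := invNum_mul_sTr_desc h h1; omega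
  · intro h1; exact invNum_mul_sTr_asc h h1

lemma len_desc_iff {n a : ℕ} (h : a + 1 < n) (w : Equiv.Perm (Fin n)) :
    len n w = len n (w * sTr n a) + 1 ↔ w ⟨a + 1, h⟩ < w ⟨a, Nat.lt_of_succ_lt h⟩ := by
  rw [len_eq_invNum, len_eq_invNum]
  constructor
  · intro hl
    rcases lt_trichotomy (w ⟨a, Nat.lt_of_succ_lt h⟩) (w ⟨a + 1, h⟩) with h1 | h1 | h1
    · have := invNum_mul_sTr_asc h h1; omega
    · exact absurd (w.injective h1) (by simp [Fin.ext_iff])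
    · exact h1
  · intro h1; exact invNum_mul_sTr_desc h h1

lemma len_mul_sTr_cases {n a : ℕ} (h : a + 1 < n) (w : Equiv.Perm (Fin n)) :
    len n (w * sTr n a) = len n w + 1 ∨ len n w = len n (w * sTr n a) + 1 := by
  rcases lt_trichotomy (w ⟨a, Nat.lt_of_succ_lt h⟩) (w ⟨a + 1, h⟩) with h1 | h1 | h1
  · exact Or.inl ((len_asc_iff h w).2 h1)
  · exact absurd (w.injective h1) (by simp [Fin.ext_iff])
  · exact Or.inr ((len_desc_iff h w).2 h1)

lemma len_sTr_mul {n a : ℕ} (w : Equiv.Perm (Fin n)) :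
    len n (sTr n a * w) = len n (w⁻¹ * sTr n a) := by
  rw [← len_inv (sTr n a * w), mul_inv_rev, sTr_inv]

lemma len_sTr_mul_asc_iff {n a : ℕ} (h : a + 1 < n) (w : Equiv.Perm (Fin n)) :
    len n (sTr n a * w) = len n w + 1 ↔
      (w⁻¹ : Equiv.Perm (Fin n)) ⟨a, Nat.lt_of_succ_lt h⟩ < (w⁻¹ : Equiv.Perm (Fin n)) ⟨a + 1, h⟩ := by
  rw [len_sTr_mul, ← len_inv w, len_asc_iff h]

lemma len_sTr_mul_cases {n a : ℕ} (h : a + 1 < n) (w : Equiv.Perm (Fin n)) :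
    len n (sTr n a * w) = len n w + 1 ∨ len n w = len n (sTr n a * w) + 1 := by
  rw [len_sTr_mul, ← len_inv w]
  exact len_mul_sTr_cases h w⁻¹

lemma diamond {n a b : ℕ} (ha : a + 1 < n) (hb : b + 1 < n) (u : Equiv.Perm (Fin n))
    (h1 : len n (sTr n a * u) = len n u + 1) (h2 : len n (u * sTr n b) = len n u + 1) :
    len n (sTr n a * u * sTr n b) = len n u + 2 ∨ sTr n a * u = u * sTr n b := by
  set A : Fin n := ⟨a, Nat.lt_of_succ_lt ha⟩
  set A1 : Fin n := ⟨a + 1, ha⟩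
  set B : Fin n := ⟨b, Nat.lt_of_succ_lt hb⟩
  set B1 : Fin n := ⟨b + 1, hb⟩
  have hpq : (u⁻¹ : Equiv.Perm (Fin n)) A < (u⁻¹ : Equiv.Perm (Fin n)) A1 :=
    (len_sTr_mul_asc_iff ha u).1 h1
  by_cases hdeg : (u⁻¹ : Equiv.Perm (Fin n)) A = B ∧ (u⁻¹ : Equiv.Perm (Fin n)) A1 = B1
  · right
    have huB : u B = A := by rw [← hdeg.1, Equiv.Perm.inv_def, Equiv.apply_symm_apply]
    have huB1 : u B1 = A1 := by rw [← hdeg.2, Equiv.Perm.inv_def, Equiv.apply_symm_apply]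
    ext x
    simp only [Equiv.Perm.mul_apply]
    rcases eq_or_ne x B with rfl | hxB
    · have hs : sTr n b B = B1 := by apply Fin.ext; rw [sTr_apply hb]; simp [B, B1]
      rw [hs, huB1, huB]
      rw [sTr_apply ha]; simp [A, A1]
    rcases eq_or_ne x B1 with rfl | hxB1
    · have hs : sTr n b B1 = B := by apply Fin.ext; rw [sTr_apply hb]; simp [B, B1]
      rw [hs, huB, huB1]
      rw [sTr_apply ha]; simp [A, A1]
    · have hsx : sTr n b x = x := by
        apply Fin.ext; rw [sTr_apply hb]
        have e1 : (x : ℕ) ≠ b := fun hc => hxB (Fin.ext hc)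
        have e2 : (x : ℕ) ≠ b + 1 := fun hc => hxB1 (Fin.ext hc)
        simp [e1, e2]
      rw [hsx]
      have hux1 : u x ≠ A := fun hc => hxB (by rw [← huB] at hc; exact u.injective hc)
      have hux2 : u x ≠ A1 := fun hc => hxB1 (by rw [← huB1] at hc; exact u.injective hc)
      rw [sTr_apply ha]
      have e1 : ((u x : Fin n) : ℕ) ≠ a := fun hc => hux1 (Fin.ext hc)
      have e2 : ((u x : Fin n) : ℕ) ≠ a + 1 := fun hc => hux2 (Fin.ext hc)
      simp [e1, e2]
  · left
    have key : len n (sTr n a * (u * sTr n b)) = len n (u * sTr n b) + 1 := by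
      rw [len_sTr_mul_asc_iff ha (u * sTr n b)]
      have hinv : ((u * sTr n b)⁻¹ : Equiv.Perm (Fin n)) = sTr n b * u⁻¹ := by
        rw [mul_inv_rev, sTr_inv]
      rw [hinv]
      simp only [Equiv.Perm.mul_apply]
      apply sTr_lt_sTr hb hpq
      rintro ⟨e1, e2⟩
      exact hdeg ⟨Fin.ext e1, Fin.ext e2⟩
    rw [← mul_assoc] at key
    omega

-- ### Demazure machinery

/-- The left Demazure step. -/
noncomputable def lStep (n : ℕ) (a : ℕ) (u : Equiv.Perm (Fin n)) : Equiv.Perm (Fin n) :=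
  if len n (sTr n a * u) = len n u + 1 then sTr n a * u else u

lemma demStep_invalid {n a : ℕ} (h : ¬ a + 1 < n) (u : Equiv.Perm (Fin n)) :
    demStep n u a = u := by
  rw [demStep, sTr_invalid h, mul_one, if_neg (by omega)]

lemma lStep_invalid {n a : ℕ} (h : ¬ a + 1 < n) (u : Equiv.Perm (Fin n)) :
    lStep n a u = u := by
  rw [lStep, sTr_invalid h, one_mul, if_neg (by omega)]

lemma lStep_demStep_comm (n : ℕ) (a b : ℕ) (u : Equiv.Perm (Fin n)) :
    lStep n a (demStep n u b) = demStep n (lStep n a u) b := by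
  by_cases ha : a + 1 < n
  · by_cases hb : b + 1 < n
    · rcases len_sTr_mul_cases (a := a) ha u with hL | hL <;>
        rcases len_mul_sTr_cases (a := b) hb u with hR | hR
      · -- both ascents
        rcases diamond ha hb u hL hR with hd | hd
        · have h1 : lStep n a u = sTr n a * u := by rw [lStep, if_pos hL]
          have h2 : demStep n u b = u * sTr n b := by rw [demStep, if_pos hR]
          have hsut2 : len n (sTr n a * (u * sTr n b)) = len n (u * sTr n b) + 1 := by
            rw [← mul_assoc]; omega
          rw [h1, h2, lStep, if_pos hsut2, demStep, ← mul_assoc,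
            if_pos (by rw [hL]; omega)]
        · have h1 : lStep n a u = sTr n a * u := by rw [lStep, if_pos hL]
          have h2 : demStep n u b = u * sTr n b := by rw [demStep, if_pos hR]
          rw [h1, h2, lStep, demStep]
          rw [if_neg, if_neg]
          · exact hd.symm
          · rw [hd, mul_assoc]
            rw [show u * (sTr n b * sTr n b) = u from by rw [sTr_mul_self, mul_one]]
            omega
          · rw [← hd]
            rw [show sTr n a * (sTr n a * u) = u from by rw [← mul_assoc, sTr_mul_self, one_mul]]
            omega
      · -- left ascent, right descent
        have h2 : demStep n u b = u := by rw [demStep]; rw [if_neg (by omega)]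
        have h1 : lStep n a u = sTr n a * u := by rw [lStep, if_pos hL]
        rw [h2, h1, demStep, if_neg]
        rcases len_mul_sTr_cases (a := b) hb (sTr n a * u) with hc | hc
        · exfalso
          rcases len_sTr_mul_cases (a := a) ha (u * sTr n b) with hc' | hc'
          · rw [← mul_assoc] at hc'
            omega
          · rw [← mul_assoc] at hc'
            omega
        · omega
      · -- left descent, right ascent
        have h1 : lStep n a u = u := by rw [lStep, if_neg (by omega)]
        have h2 : demStep n u b = u * sTr n b := by rw [demStep, if_pos hR]
        rw [h1, h2, lStep, if_neg]
        rcases len_sTr_mul_cases (a := a) ha (u * sTr n b) with hc | hc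
        · exfalso
          rcases len_mul_sTr_cases (a := b) hb (sTr n a * u) with hc' | hc'
          · rw [← mul_assoc] at hc; omega
          · rw [← mul_assoc] at hc; omega
        · omega
      · -- both descents
        have h1 : lStep n a u = u := by rw [lStep, if_neg (by omega)]
        have h2 : demStep n u b = u := by rw [demStep, if_neg (by omega)]
        rw [h1, h2, lStep, if_neg (by omega)]
    · rw [demStep_invalid hb, demStep_invalid hb]
  · rw [lStep_invalid ha, lStep_invalid ha]

lemma demWord_nil (n : ℕ) : demWord n [] = 1 := rfl

lemma demWord_append_singleton (n : ℕ) (l : List ℕ) (a : ℕ) :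
    demWord n (l ++ [a]) = demStep n (demWord n l) a := by
  simp [demWord, List.foldl_append]

lemma demWord_cons (n : ℕ) (a : ℕ) (l : List ℕ) :
    demWord n (a :: l) = lStep n a (demWord n l) := by
  induction l using List.reverseRecOn with
  | nil =>
      show demStep n 1 a = lStep n a 1
      rw [demStep, lStep, one_mul, mul_one, len_one]
  | append_singleton m b ih =>
      rw [show a :: (m ++ [b]) = (a :: m) ++ [b] from rfl,
        demWord_append_singleton, demWord_append_singleton, ih, lStep_demStep_comm]

-- ### non-fixed-point counting

/-- Number of non-fixed points. -/
def nfx (n : ℕ) (y : Equiv.Perm (Fin n)) : ℕ :=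
  (Finset.univ.filter (fun i : Fin n => y i ≠ i)).card

lemma nfx_one (n : ℕ) : nfx n 1 = 0 := by
  rw [nfx, Finset.card_eq_zero, Finset.filter_eq_empty_iff]
  simp

lemma nfx_le (n : ℕ) (y : Equiv.Perm (Fin n)) : nfx n y ≤ n := by
  calc nfx n y ≤ (Finset.univ : Finset (Fin n)).card := Finset.card_filter_le _ _
  _ = n := by simp

lemma nfx_eq_n_iff {n : ℕ} (y : Equiv.Perm (Fin n)) : nfx n y = n ↔ ∀ i, y i ≠ i := by
  rw [nfx]
  constructor
  · intro h i
    have : Finset.univ.filter (fun i : Fin n => y i ≠ i) = Finset.univ :=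
      Finset.eq_univ_of_card _ (by simpa using h)
    have := Finset.eq_univ_iff_forall.1 this i
    simpa using this
  · intro h
    rw [Finset.filter_true_of_mem (fun i _ => h i)]
    simp

lemma nfx_conj (n : ℕ) (σ y : Equiv.Perm (Fin n)) : nfx n (σ * y * σ⁻¹) = nfx n y := by
  apply Finset.card_bij' (fun i _ => (σ⁻¹ : Equiv.Perm (Fin n)) i) (fun i _ => σ i)
  · intro i hi
    simp only [Finset.mem_filter, Finset.mem_univ, true_and] at hi ⊢
    simp only [Equiv.Perm.mul_apply] at hi ⊢
    intro hc
    apply hi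
    rw [hc, Equiv.Perm.inv_def, Equiv.apply_symm_apply]
  · intro i hi
    simp only [Finset.mem_filter, Finset.mem_univ, true_and] at hi ⊢
    simp only [Equiv.Perm.mul_apply] at hi ⊢
    intro hc
    apply hi
    have := congrArg (⇑(σ⁻¹)) hc
    simpa using this
  · intro i _; simp
  · intro i _; simp

lemma nfx_sTr_mul_le {n a : ℕ} (h : a + 1 < n) (y : Equiv.Perm (Fin n)) :
    nfx n (sTr n a * y) ≤ nfx n y + 2 := by
  classical
  set A : Fin n := ⟨a, Nat.lt_of_succ_lt h⟩
  set A1 : Fin n := ⟨a + 1, h⟩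
  have hsub : Finset.univ.filter (fun i : Fin n => (sTr n a * y) i ≠ i) ⊆
      (Finset.univ.filter (fun i : Fin n => y i ≠ i)) ∪ {A, A1} := by
    intro i hi
    simp only [Finset.mem_filter, Finset.mem_univ, true_and] at hi
    simp only [Equiv.Perm.mul_apply] at hi
    by_cases hyi : y i = i
    · rw [hyi] at hi
      have : (i : ℕ) = a ∨ (i : ℕ) = a + 1 := by
        by_contra hc
        push_neg at hc
        apply hi
        apply Fin.ext
        rw [sTr_apply h]
        simp [hc.1, hc.2]
      simp only [Finset.mem_union, Finset.mem_insert, Finset.mem_singleton]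
      rcases this with h' | h'
      · exact Or.inr (Or.inl (Fin.ext h'))
      · exact Or.inr (Or.inr (Fin.ext h'))
    · simp only [Finset.mem_union, Finset.mem_filter, Finset.mem_univ, true_and]
      exact Or.inl hyi
  calc nfx n (sTr n a * y) ≤ ((Finset.univ.filter (fun i : Fin n => y i ≠ i)) ∪ {A, A1}).card :=
        Finset.card_le_card hsub
    _ ≤ nfx n y + ({A, A1} : Finset (Fin n)).card := Finset.card_union_le _ _
    _ ≤ nfx n y + 2 := by
        have : ({A, A1} : Finset (Fin n)).card ≤ 2 := Finset.card_insert_le _ _ |>.trans (by simp)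
        omega

-- ### the involution step

lemma len_sTr_mul_cases' {n a : ℕ} (h : a + 1 < n) (w : Equiv.Perm (Fin n)) :
    len n (sTr n a * w) = len n w + 1 ∨ len n w = len n (sTr n a * w) + 1 :=
  len_sTr_mul_cases h w

lemma len_ys_eq_len_sy {n a : ℕ} {y : Equiv.Perm (Fin n)} (hy : y⁻¹ = y) :
    len n (y * sTr n a) = len n (sTr n a * y) := by
  rw [← len_inv (y * sTr n a), mul_inv_rev, sTr_inv, hy]

/-- The fundamental step analysis for involution words. -/
lemma invStep_main {n a : ℕ} {y : Equiv.Perm (Fin n)} (hy : y⁻¹ = y) :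
    let T := demStep n (lStep n a y) a
    T⁻¹ = T ∧ 2 * len n T + nfx n T ≤ 2 * len n y + nfx n y + 4 ∧
      ((∀ i, y i ≠ i) → 2 * len n T + nfx n T = 2 * len n y + nfx n y + 4 →
        T = sTr n a * y * sTr n a ∧ len n T = len n y + 2 ∧ (∀ i, T i ≠ i)) := by
  intro T
  by_cases ha : a + 1 < n
  swap
  · have hT : T = y := by
      show demStep n (lStep n a y) a = y
      rw [lStep_invalid ha, demStep_invalid ha]
    rw [hT]
    refine ⟨hy, by omega, fun _ hc => absurd hc (by omega)⟩
  rcases len_sTr_mul_cases' ha y with hL | hL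
  · -- left ascent
    have hlstep : lStep n a y = sTr n a * y := by rw [lStep, if_pos hL]
    by_cases hasc2 : len n (sTr n a * y * sTr n a) = len n (sTr n a * y) + 1
    · -- case A : T = s y s
      have hT : T = sTr n a * y * sTr n a := by
        show demStep n (lStep n a y) a = _
        rw [hlstep, demStep, if_pos hasc2]
      have hTinv : (sTr n a * y * sTr n a)⁻¹ = sTr n a * y * sTr n a := by
        rw [mul_inv_rev, mul_inv_rev, sTr_inv, hy, mul_assoc]
      have hnfx : nfx n (sTr n a * y * sTr n a) = nfx n y := by
        have := nfx_conj n (sTr n a) y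
        rwa [sTr_inv] at this
      have hlen : len n (sTr n a * y * sTr n a) = len n y + 2 := by omega
      rw [hT]
      refine ⟨hTinv, by omega, fun hfpf _ => ⟨rfl, hlen, ?_⟩⟩
      intro i hc
      simp only [Equiv.Perm.mul_apply] at hc
      have : y (sTr n a i) = sTr n a i := by
        have := congrArg (sTr n a) hc
        rwa [sTr_sTr] at this
      exact hfpf _ this
    · -- case B : sy = ys, T = s y
      have hys : len n (y * sTr n a) = len n y + 1 := by rw [len_ys_eq_len_sy hy, hL]
      have hcomm : sTr n a * y = y * sTr n a := by
        rcases diamond ha ha y hL hys with hd | hd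
        · exfalso; apply hasc2; omega
        · exact hd
      have hT : T = sTr n a * y := by
        show demStep n (lStep n a y) a = _
        rw [hlstep, demStep, if_neg hasc2]
      have hTinv : (sTr n a * y)⁻¹ = sTr n a * y := by
        rw [mul_inv_rev, sTr_inv, hy, hcomm]
      have hnfxle := nfx_sTr_mul_le ha y
      rw [hT]
      refine ⟨hTinv, by omega, fun hfpf heq => ?_⟩
      exfalso
      have h1 : nfx n y = n := (nfx_eq_n_iff y).2 hfpf
      have h2 := nfx_le n (sTr n a * y)
      omega
  · -- left descent : T = y
    have hlstep : lStep n a y = y := by rw [lStep, if_neg (by omega)]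
    have hys : len n (y * sTr n a) = len n (sTr n a * y) := len_ys_eq_len_sy hy
    have hT : T = y := by
      show demStep n (lStep n a y) a = y
      rw [hlstep, demStep, if_neg (by omega)]
    rw [hT]
    exact ⟨hy, by omega, fun _ hc => absurd hc (by omega)⟩

/-- If conjugation increases length by 2, the involution Demazure step is conjugation. -/
lemma invStep_conj {n a : ℕ} (ha : a + 1 < n) (y : Equiv.Perm (Fin n))
    (hlen : len n (sTr n a * y * sTr n a) = len n y + 2) :
    demStep n (lStep n a y) a = sTr n a * y * sTr n a := by
  have h1 : len n (sTr n a * y) = len n y + 1 := by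
    rcases len_sTr_mul_cases ha y with h | h
    · exact h
    · exfalso
      rcases len_mul_sTr_cases (a := a) ha (sTr n a * y) with h' | h' <;> omega
  have h2 : len n (sTr n a * y * sTr n a) = len n (sTr n a * y) + 1 := by omega
  rw [lStep, if_pos h1, demStep, if_pos h2]

lemma len_conj_le {n a : ℕ} (y : Equiv.Perm (Fin n)) :
    len n (sTr n a * y * sTr n a) ≤ len n y + 2 := by
  by_cases ha : a + 1 < n
  · rcases len_sTr_mul_cases ha y with h | h <;>
      rcases len_mul_sTr_cases (a := a) ha (sTr n a * y) with h' | h' <;> omega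
  · rw [sTr_invalid ha, mul_one, one_mul]; omega

-- ### invWordProd recursion

lemma invWordProd_nil (n : ℕ) : invWordProd n [] = 1 := rfl

lemma invWordProd_append_singleton (n : ℕ) (l : List ℕ) (a : ℕ) :
    invWordProd n (l ++ [a]) = demStep n (lStep n a (invWordProd n l)) a := by
  have h1 : (l ++ [a]).reverse ++ (l ++ [a]) = a :: ((l.reverse ++ l) ++ [a]) := by
    simp
  rw [invWordProd, h1, demWord_cons, demWord_append_singleton, lStep_demStep_comm]
  rfl

/-- Lower bound bookkeeping for involution words. -/
lemma invWordProd_invol_phi (n : ℕ) (l : List ℕ) :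
    (invWordProd n l)⁻¹ = invWordProd n l ∧
      2 * len n (invWordProd n l) + nfx n (invWordProd n l) ≤ 4 * l.length := by
  induction l using List.reverseRecOn with
  | nil =>
      rw [invWordProd_nil]
      simp [len_one, nfx_one]
  | append_singleton m a ih =>
      rw [invWordProd_append_singleton]
      obtain ⟨hinv, hle⟩ := ih
      obtain ⟨h1, h2, _⟩ := invStep_main (a := a) hinv
      refine ⟨h1, ?_⟩
      simp only [List.length_append, List.length_singleton]
      omega

-- ### conjWordProd recursion

lemma conjWordProd_nil (n : ℕ) : conjWordProd n [] = onefpf n := by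
  simp [conjWordProd, wordProd_nil]

lemma conjWordProd_append_singleton (n : ℕ) (l : List ℕ) (a : ℕ) :
    conjWordProd n (l ++ [a]) = sTr n a * conjWordProd n l * sTr n a := by
  rw [conjWordProd, conjWordProd, List.reverse_append]
  simp only [List.reverse_cons, List.reverse_nil, List.nil_append]
  rw [show [a] ++ l.reverse = [a] ++ l.reverse from rfl, wordProd_append, wordProd_append,
    wordProd_singleton]
  group

lemma conjWordProd_invol {n : ℕ} (hfpf1 : (onefpf n)⁻¹ = onefpf n) (l : List ℕ) :
    (conjWordProd n l)⁻¹ = conjWordProd n l := by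
  induction l using List.reverseRecOn with
  | nil => rw [conjWordProd_nil]; exact hfpf1
  | append_singleton m a ih =>
      rw [conjWordProd_append_singleton, mul_inv_rev, mul_inv_rev, sTr_inv, ih, mul_assoc]

lemma conjWordProd_fpf {n : ℕ} (hf : ∀ i, onefpf n i ≠ i) (l : List ℕ) :
    ∀ i, conjWordProd n l i ≠ i := by
  induction l using List.reverseRecOn with
  | nil => rw [conjWordProd_nil]; exact hf
  | append_singleton m a ih =>
      rw [conjWordProd_append_singleton]
      intro i hc
      simp only [Equiv.Perm.mul_apply] at hc
      have := congrArg (⇑(sTr n a)) hc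
      rw [sTr_sTr] at this
      exact ih _ this

lemma len_conjWordProd_le (n : ℕ) (l : List ℕ) :
    len n (conjWordProd n l) ≤ len n (onefpf n) + 2 * l.length := by
  induction l using List.reverseRecOn with
  | nil => rw [conjWordProd_nil]; omega
  | append_singleton m a ih =>
      rw [conjWordProd_append_singleton]
      have := len_conj_le (n := n) (a := a) (conjWordProd n m)
      simp only [List.length_append, List.length_singleton]
      omega

-- ### the base word

def baseK (k : ℕ) : List ℕ := (List.range k).map (fun i => 2 * i)

lemma fpfBase_eq_baseK (n : ℕ) : fpfBase n = baseK (n / 2) := rfl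

lemma baseK_succ (k : ℕ) : baseK (k + 1) = baseK k ++ [2 * k] := by
  simp [baseK, List.range_succ]

lemma baseK_length (k : ℕ) : (baseK k).length = k := by simp [baseK]

lemma isWord_baseK {n k : ℕ} (hk : 2 * k ≤ n) : IsWord n (baseK k) := by
  intro a ha
  simp only [baseK, List.mem_map, List.mem_range] at ha
  obtain ⟨i, hi, rfl⟩ := ha
  omega

lemma wordProd_baseK_val {n : ℕ} (k : ℕ) (hk : 2 * k ≤ n) (x : Fin n) :
    ((wordProd n (baseK k) x : Fin n) : ℕ) =
      if (x : ℕ) < 2 * k then (if (x : ℕ) % 2 = 0 then (x : ℕ) + 1 else (x : ℕ) - 1)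
      else (x : ℕ) := by
  induction k generalizing x with
  | zero => simp [baseK, wordProd_nil]
  | succ k ih =>
      have hk' : 2 * k ≤ n := by omega
      have hv : 2 * k + 1 < n := by omega
      rw [baseK_succ, wordProd_append, wordProd_singleton]
      simp only [Equiv.Perm.mul_apply]
      have hs := sTr_apply hv x
      have hih := ih hk' (sTr n (2 * k) x)
      rw [hih]
      split_ifs at hs ⊢ <;> omega

lemma wordProd_baseK_invol {n : ℕ} (k : ℕ) (hk : 2 * k ≤ n) :
    (wordProd n (baseK k))⁻¹ = wordProd n (baseK k) := by
  rw [inv_eq_iff_mul_eq_one]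
  ext x
  simp only [Equiv.Perm.mul_apply, Equiv.Perm.one_apply]
  have h1 := wordProd_baseK_val k hk x
  have h2 := wordProd_baseK_val k hk (wordProd n (baseK k) x)
  rw [h2]
  split_ifs at h1 ⊢ <;> omega

lemma wordProd_baseK_comm {n : ℕ} (k : ℕ) (hv : 2 * k + 1 < n) :
    sTr n (2 * k) * wordProd n (baseK k) = wordProd n (baseK k) * sTr n (2 * k) := by
  have hk : 2 * k ≤ n := by omega
  ext x
  simp only [Equiv.Perm.mul_apply]
  have h1 := wordProd_baseK_val k hk x
  have h2 := sTr_apply hv x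
  have h3 := wordProd_baseK_val k hk (sTr n (2 * k) x)
  have h4 := sTr_apply hv (wordProd n (baseK k) x)
  rw [h4, h3]
  split_ifs at h1 h2 ⊢ <;> omega

lemma baseK_main {n : ℕ} (k : ℕ) (hk : 2 * k ≤ n) :
    len n (wordProd n (baseK k)) = k ∧
      invWordProd n (baseK k) = wordProd n (baseK k) := by
  induction k with
  | zero => simp [baseK, wordProd_nil, len_one, invWordProd_nil]
  | succ k ih =>
      have hk' : 2 * k ≤ n := by omega
      have hv : 2 * k + 1 < n := by omega
      obtain ⟨ihlen, ihinv⟩ := ih hk'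
      set π := wordProd n (baseK k) with hπ
      have hπinv : π⁻¹ = π := wordProd_baseK_invol k hk'
      have hvalA : (π ⟨2 * k, by omega⟩ : ℕ) = 2 * k := by
        rw [wordProd_baseK_val k hk']; simp
      have hvalA1 : (π ⟨2 * k + 1, hv⟩ : ℕ) = 2 * k + 1 := by
        rw [wordProd_baseK_val k hk']
        simp only []
        split_ifs <;> omega
      have hasc : len n (π * sTr n (2 * k)) = len n π + 1 := by
        rw [len_asc_iff hv]
        rw [Fin.lt_def, hvalA, hvalA1]
        omega
      have hlasc : len n (sTr n (2 * k) * π) = len n π + 1 := by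
        rw [len_sTr_mul_asc_iff hv, hπinv, Fin.lt_def, hvalA, hvalA1]
        omega
      have hcomm := wordProd_baseK_comm k hv
      constructor
      · rw [baseK_succ, wordProd_append, wordProd_singleton, ← hπ, hasc, ihlen]
      · rw [← hπ] at hcomm
        have hconj : sTr n (2 * k) * π * sTr n (2 * k) = π := by
          rw [hcomm, mul_assoc, sTr_mul_self, mul_one]
        rw [baseK_succ, invWordProd_append_singleton, ihinv,
          wordProd_append, wordProd_singleton, ← hπ]
        rw [lStep, if_pos hlasc, demStep, if_neg (by rw [hconj]; omega), hcomm]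

-- ### onefpf facts

lemma len_onefpf (n : ℕ) : len n (onefpf n) = n / 2 :=
  (baseK_main (n / 2) (by omega)).1

lemma invWordProd_fpfBase (n : ℕ) : invWordProd n (fpfBase n) = onefpf n := by
  rw [fpfBase_eq_baseK]
  exact (baseK_main (n / 2) (by omega)).2

lemma onefpf_val {n : ℕ} (hn : Even n) (x : Fin n) :
    ((onefpf n x : Fin n) : ℕ) = if (x : ℕ) % 2 = 0 then (x : ℕ) + 1 else (x : ℕ) - 1 := by
  obtain ⟨r, hr⟩ := hn
  have h2 : 2 * (n / 2) = n := by omega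
  have := wordProd_baseK_val (n := n) (n / 2) (by omega) x
  rw [onefpf, fpfBase_eq_baseK, this, if_pos (by omega)]

lemma onefpf_inv (n : ℕ) : (onefpf n)⁻¹ = onefpf n :=
  wordProd_baseK_invol (n / 2) (by omega)

lemma onefpf_fpf {n : ℕ} (hn : Even n) : ∀ i, onefpf n i ≠ i := by
  intro i hc
  have h1 := onefpf_val hn i
  rw [hc] at h1
  split_ifs at h1 <;> omega

lemma fpfBase_length (n : ℕ) : (fpfBase n).length = n / 2 := by
  rw [fpfBase_eq_baseK, baseK_length]

lemma isWord_fpfBase (n : ℕ) : IsWord n (fpfBase n) := by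
  rw [fpfBase_eq_baseK]
  exact isWord_baseK (by omega)

-- ### descent existence for fpf involutions

lemma exists_big {n : ℕ} (hn : Even n) {z : Equiv.Perm (Fin n)}
    (hz : z⁻¹ = z) (hfpf : ∀ i, z i ≠ i) (hne : z ≠ onefpf n) :
    ∃ i : Fin n, (i : ℕ) + 1 < (z i : ℕ) := by
  by_contra hc
  push_neg at hc
  apply hne
  have hinvol : ∀ x : Fin n, z (z x) = x := fun x => by
    rw [show z (z x) = z⁻¹ (z x) from by rw [hz], Equiv.Perm.inv_def, Equiv.symm_apply_apply]
  have key : ∀ m : ℕ, ∀ x : Fin n, (x : ℕ) ≤ m →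
      ((z x : Fin n) : ℕ) = if (x : ℕ) % 2 = 0 then (x : ℕ) + 1 else (x : ℕ) - 1 := by
    intro m
    induction m with
    | zero =>
        intro x hx
        have h1 := hc x
        have h2 : (z x : ℕ) ≠ (x : ℕ) := fun hcc => hfpf x (Fin.ext hcc)
        rw [if_pos (by omega)]
        omega
    | succ m ih =>
        intro x hx
        rcases Nat.lt_or_ge (x : ℕ) (m + 1) with hxm | hxm
        · exact ih x (by omega)
        have hxe : (x : ℕ) = m + 1 := by omega
        have h1 := hc x
        have h2 : (z x : ℕ) ≠ (x : ℕ) := fun hcc => hfpf x (Fin.ext hcc)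
        rcases Nat.lt_or_ge ((z x : Fin n) : ℕ) (x : ℕ) with hlt | hge
        · -- z x < x : use involution and ih at y := z x
          have hy := ih (z x) (by omega)
          rw [hinvol] at hy
          split_ifs at hy with hpar
          · -- x = z x + 1
            rw [if_neg (by omega)]
            omega
          · -- x = z x - 1, impossible
            omega
        · -- z x = x + 1
          have hzx : ((z x : Fin n) : ℕ) = (x : ℕ) + 1 := by omega
          rcases Nat.eq_zero_or_pos ((x : ℕ) % 2) with hpar | hpar
          · rw [if_pos hpar]; omega
          · -- x odd : contradiction via w = x - 1
            exfalso
            have hxpos : 0 < (x : ℕ) := by omega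
            set w : Fin n := ⟨(x : ℕ) - 1, by omega⟩ with hw
            have hwval : (w : ℕ) = (x : ℕ) - 1 := rfl
            have hzw := ih w (by omega)
            have hwpar : ((w : Fin n) : ℕ) % 2 = 0 := by omega
            rw [if_pos hwpar] at hzw
            have hzwx : ((z w : Fin n) : ℕ) = (x : ℕ) := by omega
            have hzwe : z w = x := Fin.ext hzwx
            have hwzx : w = z x := by
              have := congrArg z hzwe
              rwa [hinvol] at this
            have hvv : (w : ℕ) = ((z x : Fin n) : ℕ) := congrArg Fin.val hwzx
            omega
  ext x
  have h1 := key (x : ℕ) x le_rfl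
  have h2 := onefpf_val hn x
  omega

lemma exists_fpf_descent {n : ℕ} (hn : Even n) {z : Equiv.Perm (Fin n)}
    (hz : z⁻¹ = z) (hfpf : ∀ i, z i ≠ i) (hne : z ≠ onefpf n) :
    ∃ a, ∃ h : a + 1 < n, len n z = len n (sTr n a * z * sTr n a) + 2 := by
  obtain ⟨i0, hi0⟩ := exists_big hn hz hfpf hne
  -- climb to find a descent a with a + 1 < z(a)
  have climb : ∀ m : ℕ, ∀ i : Fin n, n - (i : ℕ) ≤ m → (i : ℕ) + 1 < (z i : ℕ) →
      ∃ a, ∃ h : a + 1 < n, ((z ⟨a + 1, h⟩ : Fin n) : ℕ) < ((z ⟨a, Nat.lt_of_succ_lt h⟩ : Fin n) : ℕ) ∧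
        a + 1 < ((z ⟨a, Nat.lt_of_succ_lt h⟩ : Fin n) : ℕ) := by
    intro m
    induction m with
    | zero => intro i hi _; have := i.isLt; omega
    | succ m ih =>
        intro i hi hbig
        have hzi : ((z i : Fin n) : ℕ) < n := (z i).isLt
        have hv : (i : ℕ) + 1 < n := by omega
        set i' : Fin n := ⟨(i : ℕ) + 1, hv⟩ with hi'
        rcases lt_trichotomy ((z i' : Fin n) : ℕ) ((z i : Fin n) : ℕ) with hlt | heq | hgt
        · refine ⟨(i : ℕ), hv, ?_, ?_⟩
          · have : (⟨(i : ℕ), Nat.lt_of_succ_lt hv⟩ : Fin n) = i := Fin.ext rfl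
            rw [this]
            exact hlt
          · have : (⟨(i : ℕ), Nat.lt_of_succ_lt hv⟩ : Fin n) = i := Fin.ext rfl
            rw [this]
            exact hbig
        · exfalso
          have h' : i' = i := z.injective (Fin.ext heq)
          have hvv : ((i : ℕ) + 1) = (i : ℕ) := congrArg Fin.val h'
          omega
        · have hi'val : (i' : ℕ) = (i : ℕ) + 1 := rfl
          exact ih i' (by omega) (by omega)
  obtain ⟨a, h, hdesc, hbig⟩ := climb n i0 (by omega) hi0
  refine ⟨a, h, ?_⟩
  set A : Fin n := ⟨a, Nat.lt_of_succ_lt h⟩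
  set A1 : Fin n := ⟨a + 1, h⟩
  have hd1 : len n z = len n (z * sTr n a) + 1 :=
    (len_desc_iff h z).2 (by rw [Fin.lt_def]; exact hdesc)
  have hne2 : sTr n a * z * sTr n a ≠ z := by
    intro hcc
    have hzs : z * sTr n a = sTr n a * z := by
      have := congrArg (fun w => w * sTr n a) hcc
      simp only [mul_assoc, sTr_mul_self, mul_one] at this
      rw [← this]
    have hpt : z (sTr n a A1) = sTr n a (z A1) := by
      have := congrArg (fun w : Equiv.Perm (Fin n) => w A1) hzs
      simpa [Equiv.Perm.mul_apply] using this
    have hsA1 : sTr n a A1 = A := by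
      apply Fin.ext; rw [sTr_apply h]; simp [A1, A]
    rw [hsA1] at hpt
    have hval := sTr_apply h (z A1)
    have := congrArg Fin.val hpt
    rw [hval] at this
    split_ifs at this <;> omega
  have husz : z * sTr n a * sTr n a = z := by rw [mul_assoc, sTr_mul_self, mul_one]
  rcases len_sTr_mul_cases h (z * sTr n a) with hcase | hcase
  · exfalso
    have hus : len n (z * sTr n a * sTr n a) = len n (z * sTr n a) + 1 := by rw [husz]; omega
    rcases diamond h h (z * sTr n a) hcase hus with hdd | hdd
    · have hsz : len n (sTr n a * z) = len n (z * sTr n a) := by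
        rw [← len_inv (sTr n a * z), mul_inv_rev, sTr_inv, hz]
      have he : sTr n a * (z * sTr n a) * sTr n a = sTr n a * z := by
        rw [mul_assoc (sTr n a) (z * sTr n a), husz]
      rw [he] at hdd
      omega
    · apply hne2
      rw [← mul_assoc] at hdd
      rw [hdd, husz]
  · rw [← mul_assoc] at hcase
    omega

lemma sandwich {n a : ℕ} (w : Equiv.Perm (Fin n)) :
    sTr n a * (sTr n a * w * sTr n a) * sTr n a = w := by
  have h1 : sTr n a * (sTr n a * w * sTr n a) * sTr n a =
      (sTr n a * sTr n a) * w * (sTr n a * sTr n a) := by group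
  rw [h1, sTr_mul_self, one_mul, mul_one]

lemma sConj_inv {n a : ℕ} {z : Equiv.Perm (Fin n)} (hz : z⁻¹ = z) :
    (sTr n a * z * sTr n a)⁻¹ = sTr n a * z * sTr n a := by
  rw [mul_inv_rev, mul_inv_rev, sTr_inv, hz, mul_assoc]

lemma sConj_fpf {n a : ℕ} {z : Equiv.Perm (Fin n)} (hfpf : ∀ i, z i ≠ i) :
    ∀ i, (sTr n a * z * sTr n a) i ≠ i := by
  intro i hc
  simp only [Equiv.Perm.mul_apply] at hc
  have := congrArg (⇑(sTr n a)) hc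
  rw [sTr_sTr] at this
  exact hfpf _ this

lemma exists_min_fpf_word {n : ℕ} (hn : Even n) :
    ∀ z : Equiv.Perm (Fin n), z⁻¹ = z → (∀ i, z i ≠ i) →
      ∃ l, IsWord n l ∧ conjWordProd n l = z ∧ len n z = len n (onefpf n) + 2 * l.length := by
  suffices H : ∀ N, ∀ z : Equiv.Perm (Fin n), len n z = N → z⁻¹ = z → (∀ i, z i ≠ i) →
      ∃ l, IsWord n l ∧ conjWordProd n l = z ∧ len n z = len n (onefpf n) + 2 * l.length by
    exact fun z hz hf => H (len n z) z rfl hz hf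
  intro N
  induction N using Nat.strong_induction_on with
  | _ N ih =>
      intro z hN hz hfpf
      rcases eq_or_ne z (onefpf n) with rfl | hne
      · exact ⟨[], fun a ha => by simp at ha, conjWordProd_nil n, by simp⟩
      · obtain ⟨a, ha, hlen⟩ := exists_fpf_descent hn hz hfpf hne
        set z' := sTr n a * z * sTr n a with hz'
        obtain ⟨l', hl1, hl2, hl3⟩ := ih (len n z') (by omega) z' rfl (sConj_inv hz) (sConj_fpf hfpf)
        refine ⟨l' ++ [a], ?_, ?_, ?_⟩
        · intro b hb
          rcases List.mem_append.1 hb with hb | hb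
          · exact hl1 b hb
          · simp at hb; omega
        · rw [conjWordProd_append_singleton, hl2, hz', sandwich]
        · simp only [List.length_append, List.length_singleton]
          omega

lemma bridge1 {n : ℕ} (l : List ℕ) (hw : IsWord n l)
    (hlen : len n (conjWordProd n l) = len n (onefpf n) + 2 * l.length) :
    invWordProd n (fpfBase n ++ l) = conjWordProd n l := by
  induction l using List.reverseRecOn with
  | nil => rw [conjWordProd_nil]; simpa using invWordProd_fpfBase n
  | append_singleton m a ih =>
      have hwm : IsWord n m := fun b hb => hw b (by simp [hb])
      have ha : a + 1 < n := hw a (by simp)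
      rw [conjWordProd_append_singleton] at hlen ⊢
      simp only [List.length_append, List.length_singleton] at hlen
      have hub := len_conjWordProd_le n m
      have hub2 : len n (sTr n a * conjWordProd n m * sTr n a) ≤ len n (conjWordProd n m) + 2 :=
        len_conj_le (n := n) (a := a) (conjWordProd n m)
      have hm : len n (conjWordProd n m) = len n (onefpf n) + 2 * m.length := by omega
      have ihm := ih hwm hm
      have hstep : len n (sTr n a * conjWordProd n m * sTr n a) = len n (conjWordProd n m) + 2 := by
        omega
      rw [show fpfBase n ++ (m ++ [a]) = (fpfBase n ++ m) ++ [a] from by simp,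
        invWordProd_append_singleton, ihm, invStep_conj ha _ hstep]

lemma bridge2 {n : ℕ} (hn : Even n) (l : List ℕ) (hw : IsWord n l)
    (hphi : 2 * len n (invWordProd n (fpfBase n ++ l)) + nfx n (invWordProd n (fpfBase n ++ l)) =
      4 * (n / 2) + 4 * l.length) :
    conjWordProd n l = invWordProd n (fpfBase n ++ l) ∧
      len n (conjWordProd n l) = len n (onefpf n) + 2 * l.length := by
  have h2 : 2 * (n / 2) = n := by obtain ⟨r, hr⟩ := hn; omega
  induction l using List.reverseRecOn with
  | nil =>
      rw [conjWordProd_nil]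
      simp only [List.append_nil] at hphi ⊢
      rw [invWordProd_fpfBase]
      exact ⟨rfl, by simp⟩
  | append_singleton m a ih =>
      have hwm : IsWord n m := fun b hb => hw b (by simp [hb])
      have ha : a + 1 < n := hw a (by simp)
      rw [show fpfBase n ++ (m ++ [a]) = (fpfBase n ++ m) ++ [a] from by simp,
        invWordProd_append_singleton] at hphi ⊢
      set y := invWordProd n (fpfBase n ++ m) with hy
      obtain ⟨hyinv, hyphi⟩ := invWordProd_invol_phi n (fpfBase n ++ m)
      rw [← hy] at hyinv hyphi
      have hyphi' : 2 * len n y + nfx n y ≤ 4 * (n / 2) + 4 * m.length := by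
        have : (fpfBase n ++ m).length = n / 2 + m.length := by
          simp [fpfBase_length]
        omega
      obtain ⟨hTinv, hTle, hTmax⟩ := invStep_main (a := a) hyinv
      simp only [List.length_append, List.length_singleton] at hphi
      have heq : 2 * len n y + nfx n y = 4 * (n / 2) + 4 * m.length := by omega
      obtain ⟨ihb, ihlen⟩ := ih hwm heq
      have hyfpf : ∀ i, y i ≠ i := by
        rw [← ihb]
        exact conjWordProd_fpf (onefpf_fpf hn) m
      obtain ⟨hconj, hlen2, _⟩ := hTmax hyfpf (by omega)
      rw [hconj]
      constructor
      · rw [conjWordProd_append_singleton, ihb]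
      · rw [ihb] at ihlen
        rw [conjWordProd_append_singleton, ihb, ← hconj, hlen2]
        simp only [List.length_append, List.length_singleton]
        omega

theorem final
    (n : ℕ) (hn : Even n) (z : Equiv.Perm (Fin n))
    (hz : z⁻¹ = z) (hfpf : ∀ i : Fin n, z i ≠ i) (l : List ℕ) :
    IsFpfInvWord n l z ↔ IsInvWord n (fpfBase n ++ l) z := by
  obtain ⟨l₀, hw₀, hg₀, hlen₀⟩ := exists_min_fpf_word hn z hz hfpf
  have h2 : 2 * (n / 2) = n := by obtain ⟨r, hr⟩ := hn; omega
  have lenf : len n (onefpf n) = n / 2 := len_onefpf n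
  have nfxz : nfx n z = n := (nfx_eq_n_iff z).2 hfpf
  have LBg : ∀ l' : List ℕ, conjWordProd n l' = z → len n z ≤ n / 2 + 2 * l'.length := by
    intro l' hl'
    have := len_conjWordProd_le n l'
    rw [hl'] at this
    omega
  have LBf : ∀ m' : List ℕ, invWordProd n m' = z → 2 * len n z + n ≤ 4 * m'.length := by
    intro m' hm'
    have := (invWordProd_invol_phi n m').2
    rw [hm', nfxz] at this
    omega
  have hexact₀ : len n (conjWordProd n l₀) = len n (onefpf n) + 2 * l₀.length := by
    rw [hg₀]; exact hlen₀
  have hbr₀ : invWordProd n (fpfBase n ++ l₀) = z := by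
    rw [bridge1 l₀ hw₀ hexact₀, hg₀]
  have hw₀' : IsWord n (fpfBase n ++ l₀) := by
    intro b hb
    rcases List.mem_append.1 hb with hb | hb
    · exact isWord_fpfBase n b hb
    · exact hw₀ b hb
  constructor
  · rintro ⟨hwl, hgl, hmin⟩
    have hle1 : l.length ≤ l₀.length := hmin l₀ hw₀ hg₀
    have hle2 : len n z ≤ n / 2 + 2 * l.length := LBg l hgl
    have heql : l.length = l₀.length := by omega
    have hexact : len n (conjWordProd n l) = len n (onefpf n) + 2 * l.length := by
      rw [hgl]; omega
    have hbr : invWordProd n (fpfBase n ++ l) = z := by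
      rw [bridge1 l hwl hexact, hgl]
    refine ⟨?_, hbr, ?_⟩
    · intro b hb
      rcases List.mem_append.1 hb with hb | hb
      · exact isWord_fpfBase n b hb
      · exact hwl b hb
    · intro m' hwm' hfm'
      have := LBf m' hfm'
      have hlenz : len n z = n / 2 + 2 * l.length := by omega
      have : 4 * (n / 2 + l.length) ≤ 4 * m'.length := by omega
      simp only [List.length_append, fpfBase_length]
      omega
  · rintro ⟨hwm, hfm, hmin⟩
    have hwl : IsWord n l := fun b hb => hwm b (List.mem_append.2 (Or.inr hb))
    have hle1 : (fpfBase n ++ l).length ≤ (fpfBase n ++ l₀).length := hmin _ hw₀' hbr₀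
    simp only [List.length_append, fpfBase_length] at hle1
    have hle2 := LBf (fpfBase n ++ l) hfm
    simp only [List.length_append, fpfBase_length] at hle2
    have heql : l.length = l₀.length := by omega
    have hlenz : len n z = n / 2 + 2 * l.length := by omega
    have hphi : 2 * len n (invWordProd n (fpfBase n ++ l)) + nfx n (invWordProd n (fpfBase n ++ l)) =
        4 * (n / 2) + 4 * l.length := by
      rw [hfm, nfxz]; omega
    obtain ⟨hb, _⟩ := bridge2 hn l hwl hphi
    rw [hfm] at hb
    refine ⟨hwl, hb, ?_⟩
    intro l' hwl' hgl'
    have := LBg l' hgl'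
    omega

/-- For `n` even and `z` a fixed-point-free involution, `a_1 ⋯ a_l` is an
fpf-involution word for `z` iff `1, 3, 5, …, (n-1), a_1, …, a_l` is an involution
word for `z`. -/
theorem fpfInvWord_iff_prepend_base_invWord
    (n : ℕ) (hn : Even n) (z : Equiv.Perm (Fin n))
    (hz : z⁻¹ = z) (hfpf : ∀ i : Fin n, z i ≠ i) (l : List ℕ) :
    IsFpfInvWord n l z ↔ IsInvWord n (fpfBase n ++ l) z := by
  exact final n hn z hz hfpf l
end

section
/- If v, v', w, w' ∈ S_n satisfy v ≤ w and v' ≤ w' in Bruhat order, then v' ∘ v ≤ w' ∘ w, where ∘ is the Demazure product. In particular, if v ≤ w then v^{-1} ∘ v ≤ w^{-1} ∘ w. -/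
open Equiv

namespace DemMono
open Finset Relation

variable {n : ℕ}

lemma sTr_eq (a : ℕ) (h : a + 1 < n) :
    sTr n a = Equiv.swap ⟨a, Nat.lt_of_succ_lt h⟩ ⟨a+1, h⟩ := by
  simp [sTr, h]

lemma sTr_mul_self (a : ℕ) : sTr n a * sTr n a = 1 := by
  by_cases h : a + 1 < n
  · rw [sTr_eq a h, Equiv.swap_mul_self]
  · simp [sTr, h]

lemma wordProd_nil : wordProd n [] = 1 := rfl

lemma wordProd_concat (l : List ℕ) (a : ℕ) :
    wordProd n (l ++ [a]) = wordProd n l * sTr n a := by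
  simp [wordProd]

/-- The inversion set. -/
def invSet (w : Equiv.Perm (Fin n)) : Finset (Fin n × Fin n) :=
  Finset.univ.filter (fun p : Fin n × Fin n => p.1 < p.2 ∧ w p.2 < w p.1)

lemma invNum_eq (w : Equiv.Perm (Fin n)) : invNum n w = (invSet w).card := rfl

lemma mem_invSet {w : Equiv.Perm (Fin n)} {p : Fin n × Fin n} :
    p ∈ invSet w ↔ p.1 < p.2 ∧ w p.2 < w p.1 := by
  simp [invSet]

/-- ordering behaviour of an "adjacent" swap -/
lemma swap_lt_swap_iff {i j a b : Fin n} (hij : i < j)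
    (hadj : ∀ k : Fin n, i < k → k < j → False) (hab : a < b) :
    Equiv.swap i j a < Equiv.swap i j b ↔ ¬(a = i ∧ b = j) := by
  rcases eq_or_ne a i with rfl | hai
  · rcases eq_or_ne b j with rfl | hbj
    · rw [Equiv.swap_apply_left, Equiv.swap_apply_right]
      simp [hij.asymm]
    · have hbi : b ≠ a := hab.ne'
      rw [Equiv.swap_apply_left, Equiv.swap_apply_of_ne_of_ne hbi hbj]
      have hjb : j < b := by
        rcases lt_trichotomy b j with h | h | h
        · exact absurd h (fun h' => hadj b hab h')
        · exact absurd h hbj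
        · exact h
      simp [hjb, hbj]
  · rcases eq_or_ne a j with rfl | haj
    · have hbj : b ≠ a := hab.ne'
      have hbi : b ≠ i := fun h => absurd (h ▸ hab) (not_lt.2 (h ▸ hij.le))
      rw [Equiv.swap_apply_right, Equiv.swap_apply_of_ne_of_ne hbi hbj]
      simp [hij.trans hab, hai]
    · rw [Equiv.swap_apply_of_ne_of_ne hai haj]
      rcases eq_or_ne b i with rfl | hbi
      · rw [Equiv.swap_apply_left]
        simp [hab.trans hij, hai]
      · rcases eq_or_ne b j with rfl | hbj
        · rw [Equiv.swap_apply_right]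
          have hai' : a < i := by
            rcases lt_trichotomy a i with h | h | h
            · exact h
            · exact absurd h hai
            · exact absurd h (fun h' => hadj a h' hab)
          simp [hai', hai]
        · rw [Equiv.swap_apply_of_ne_of_ne hbi hbj]
          simp [hab, hbj]


/-- sorting map used in the counting bijection -/
def phi (t : Equiv.Perm (Fin n)) (p : Fin n × Fin n) : Fin n × Fin n :=
  if t p.1 < t p.2 then (t p.1, t p.2) else (t p.2, t p.1)

lemma invNum_mul_swap_adj (w : Equiv.Perm (Fin n)) {i j : Fin n} (hij : i < j)
    (hadj : ∀ k : Fin n, i < k → k < j → False) (hw : w i < w j) :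
    invNum n (w * Equiv.swap i j) = invNum n w + 1 := by
  set t := Equiv.swap i j with ht
  set σ := w * t with hσdef
  have hσ : ∀ m, σ m = w (t m) := fun m => rfl
  have htt : ∀ m, t (t m) = m := fun m => Equiv.swap_apply_self i j m
  have hti : t i = j := Equiv.swap_apply_left i j
  have htj : t j = i := Equiv.swap_apply_right i j
  have hphi_ne : ∀ p : Fin n × Fin n, p.1 < p.2 → ¬(p.1 = i ∧ p.2 = j) →
      phi t p = (t p.1, t p.2) := by
    intro p hp hne
    rw [phi, if_pos ((swap_lt_swap_iff hij hadj hp).2 hne)]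
  have hphi_ij : phi t ((i : Fin n), j) = (i, j) := by
    rw [phi]
    simp only [hti, htj]
    rw [if_neg (not_lt.2 hij.le)]
  have hsorted : ∀ p : Fin n × Fin n, p.1 < p.2 → (phi t p).1 < (phi t p).2 := by
    intro p hp
    by_cases hne : p.1 = i ∧ p.2 = j
    · have hpij : p = (i, j) := Prod.ext hne.1 hne.2
      rw [hpij, hphi_ij]; exact hij
    · rw [hphi_ne p hp hne]; exact (swap_lt_swap_iff hij hadj hp).2 hne
  have hinvol : ∀ p : Fin n × Fin n, p.1 < p.2 → phi t (phi t p) = p := by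
    intro p hp
    by_cases hne : p.1 = i ∧ p.2 = j
    · have hpij : p = (i, j) := Prod.ext hne.1 hne.2
      rw [hpij, hphi_ij, hphi_ij]
    · rw [hphi_ne p hp hne]
      have hns : ¬(t p.1 = i ∧ t p.2 = j) := by
        rintro ⟨h1, h2⟩
        have e1 : p.1 = j := by rw [← htt p.1, h1, hti]
        have e2 : p.2 = i := by rw [← htt p.2, h2, htj]
        exact absurd (e1 ▸ e2 ▸ hp) (not_lt.2 hij.le)
      rw [hphi_ne _ ((swap_lt_swap_iff hij hadj hp).2 hne) hns]
      simp [htt]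
  have key : ∀ p : Fin n × Fin n, p.1 < p.2 →
      (phi t p ∈ invSet σ ↔ (p ∈ invSet w ∨ p = (i, j))) := by
    intro p hp
    by_cases hne : p.1 = i ∧ p.2 = j
    · have hpij : p = (i, j) := Prod.ext hne.1 hne.2
      rw [hpij, hphi_ij]
      simp only [mem_invSet, hσ, hti, htj]
      simp [hij, hw]
    · rw [hphi_ne p hp hne]
      have hps : t p.1 < t p.2 := (swap_lt_swap_iff hij hadj hp).2 hne
      simp only [mem_invSet, hσ, htt]
      have hpne : p ≠ ((i : Fin n), j) := by
        intro h; exact hne ⟨by rw [h], by rw [h]⟩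
      simp [hps, hp, hpne]
  have himg : invSet σ = (insert ((i : Fin n), j) (invSet w)).image (phi t) := by
    ext q
    constructor
    · intro hq
      have hqs : q.1 < q.2 := (mem_invSet.1 hq).1
      have hpq : phi t (phi t q) = q := hinvol q hqs
      have h2 : phi t q ∈ invSet w ∨ phi t q = ((i : Fin n), j) :=
        (key (phi t q) (hsorted q hqs)).1 (by rw [hpq]; exact hq)
      refine Finset.mem_image.2 ⟨phi t q, ?_, hpq⟩
      rcases h2 with h2 | h2
      · exact Finset.mem_insert_of_mem h2
      · rw [h2]; exact Finset.mem_insert_self _ _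
    · intro hq
      obtain ⟨p, hp, rfl⟩ := Finset.mem_image.1 hq
      rcases Finset.mem_insert.1 hp with rfl | hp'
      · exact (key _ hij).2 (Or.inr rfl)
      · exact (key _ (mem_invSet.1 hp').1).2 (Or.inl hp')
  have hsort' : ∀ p ∈ insert ((i : Fin n), j) (invSet w), p.1 < p.2 := by
    intro p hp
    rcases Finset.mem_insert.1 hp with rfl | hp'
    · exact hij
    · exact (mem_invSet.1 hp').1
  have hinj : Set.InjOn (phi t) ↑(insert ((i : Fin n), j) (invSet w)) := by
    intro p hp q hq hpq
    rw [← hinvol p (hsort' p hp), hpq, hinvol q (hsort' q hq)]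
  rw [invNum_eq, invNum_eq, himg, Finset.card_image_of_injOn hinj,
    Finset.card_insert_of_notMem (fun h => absurd (mem_invSet.1 h).2 hw.asymm),
    Nat.add_comm]


lemma invNum_mul_swap_adj' (w : Equiv.Perm (Fin n)) {i j : Fin n} (hij : i < j)
    (hadj : ∀ k : Fin n, i < k → k < j → False) (hw : w j < w i) :
    invNum n w = invNum n (w * Equiv.swap i j) + 1 := by
  have hvi : (w * Equiv.swap i j) i = w j := by
    simp [Equiv.Perm.mul_apply, Equiv.swap_apply_left]
  have hvj : (w * Equiv.swap i j) j = w i := by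
    simp [Equiv.Perm.mul_apply, Equiv.swap_apply_right]
  have h := invNum_mul_swap_adj (w * Equiv.swap i j) hij hadj (by rw [hvi, hvj]; exact hw)
  rwa [mul_assoc, Equiv.swap_mul_self, mul_one] at h

lemma swap_decomp {i k j : Fin n} (hji : j ≠ i) (hjk : j ≠ k) :
    Equiv.swap i k * Equiv.swap k j * Equiv.swap i k = Equiv.swap i j := by
  have h := (Equiv.swap_apply_apply (Equiv.swap i k) k j).symm
  rw [Equiv.swap_inv] at h
  rw [h, Equiv.swap_apply_right, Equiv.swap_apply_of_ne_of_ne hji hjk]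

lemma invNum_mul_swap_aux : ∀ d : ℕ, ∀ (w : Equiv.Perm (Fin n)) (i j : Fin n),
    i < j → w i < w j → j.val - i.val = d →
    invNum n (w * Equiv.swap i j) = invNum n w + 1 +
      2 * (Finset.univ.filter
        (fun k : Fin n => i < k ∧ k < j ∧ w i < w k ∧ w k < w j)).card := by
  intro d
  induction d using Nat.strong_induction_on with
  | _ d IH =>
  intro w i j hij hw hd
  have hijv : i.val < j.val := hij
  by_cases hbase : j.val = i.val + 1
  · have hadj : ∀ k : Fin n, i < k → k < j → False := by
      intro k h1 h2
      have h1' : i.val < k.val := h1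
      have h2' : k.val < j.val := h2
      omega
    have hM : (Finset.univ.filter
        (fun k : Fin n => i < k ∧ k < j ∧ w i < w k ∧ w k < w j)) = ∅ := by
      refine Finset.filter_eq_empty_iff.2 ?_
      intro k _
      rintro ⟨h1, h2, -⟩
      exact hadj k h1 h2
    rw [hM, invNum_mul_swap_adj w hij hadj hw]
    simp
  · -- set up the intermediate point k = i+1
    have hkn : i.val + 1 < n := lt_trans (by omega) j.isLt
    set k : Fin n := ⟨i.val + 1, hkn⟩ with hkdef
    have hik : i < k := by show i.val < i.val + 1; omega
    have hkj : k < j := by show i.val + 1 < j.val; omega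
    have hikadj : ∀ m : Fin n, i < m → m < k → False := by
      intro m h1 h2
      have h1' : i.val < m.val := h1
      have h2' : m.val < k.val := h2
      simp [hkdef] at h2'
      omega
    have hki : k ≠ i := hik.ne'
    have hji : j ≠ i := hij.ne'
    have hjk : j ≠ k := hkj.ne'
    set w1 : Equiv.Perm (Fin n) := w * Equiv.swap i k with hw1
    have hw1i : w1 i = w k := by simp [hw1, Equiv.Perm.mul_apply]
    have hw1k : w1 k = w i := by simp [hw1, Equiv.Perm.mul_apply]
    have hw1j : w1 j = w j := by
      simp [hw1, Equiv.Perm.mul_apply, Equiv.swap_apply_of_ne_of_ne hji hjk]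
    have hw1m : ∀ m : Fin n, m ≠ i → m ≠ k → w1 m = w m := by
      intro m h1 h2
      simp [hw1, Equiv.Perm.mul_apply, Equiv.swap_apply_of_ne_of_ne h1 h2]
    set w2 : Equiv.Perm (Fin n) := w1 * Equiv.swap k j with hw2
    have hw2i : w2 i = w1 i := by
      simp [hw2, Equiv.Perm.mul_apply, Equiv.swap_apply_of_ne_of_ne hik.ne hij.ne]
    have hw2k : w2 k = w1 j := by simp [hw2, Equiv.Perm.mul_apply]
    have hfinal : w2 * Equiv.swap i k = w * Equiv.swap i j := by
      rw [hw2, hw1, mul_assoc, mul_assoc, ← mul_assoc (Equiv.swap i k), swap_decomp hji hjk]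
    have hmeas : j.val - k.val < d := by simp [hkdef]; omega
    have hwik2 : w i ≠ w k := fun h => hki (w.injective h.symm)
    have hwjk2 : w j ≠ w k := fun h => hjk (w.injective h)
    -- value of IH set rewritten
    have hkm_of : ∀ m : Fin n, i < m → m ≠ k → k < m := by
      intro m h1 h2
      have h1' : i.val < m.val := h1
      have h2' : m.val ≠ k.val := fun h => h2 (Fin.ext h)
      have : k.val = i.val + 1 := rfl
      simp only [Fin.lt_def]
      omega
    rcases lt_or_gt_of_ne hwjk2 with hc | hc
    · -- Case A : w j < w k  (so w i < w j < w k)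
      have h1 : invNum n w1 = invNum n w + 1 :=
        invNum_mul_swap_adj w hik hikadj (hw.trans hc)
      have h2 := IH _ hmeas w1 k j hkj (by rw [hw1k, hw1j]; exact hw) rfl
      rw [← hw2] at h2
      have hMeq : (Finset.univ.filter
            (fun m : Fin n => k < m ∧ m < j ∧ w1 k < w1 m ∧ w1 m < w1 j)) =
          (Finset.univ.filter
            (fun m : Fin n => i < m ∧ m < j ∧ w i < w m ∧ w m < w j)) := by
        refine Finset.filter_congr ?_
        intro m _
        constructor
        · rintro ⟨ha, hb, hcc, hdd⟩
          have hmi : m ≠ i := fun h => absurd (h ▸ (hik.trans ha)) (lt_irrefl i)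
          have hmk : m ≠ k := ha.ne'
          rw [hw1k, hw1m m hmi hmk] at hcc
          rw [hw1m m hmi hmk, hw1j] at hdd
          exact ⟨hik.trans ha, hb, hcc, hdd⟩
        · rintro ⟨ha, hb, hcc, hdd⟩
          have hmk : m ≠ k := by
            rintro rfl
            exact absurd hdd (not_lt.2 hc.le)
          have hmi : m ≠ i := ha.ne'
          rw [hw1k, hw1m m hmi hmk, hw1j]
          exact ⟨hkm_of m ha hmk, hb, hcc, hdd⟩
      rw [hMeq] at h2
      have h3 : invNum n w2 = invNum n (w2 * Equiv.swap i k) + 1 := by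
        refine invNum_mul_swap_adj' w2 hik hikadj ?_
        rw [hw2i, hw2k, hw1i, hw1j]
        exact hc
      rw [hfinal] at h3
      omega
    · rcases lt_or_gt_of_ne hwik2 with hc2 | hc2
      · -- Case C : w i < w k < w j
        have h1 : invNum n w1 = invNum n w + 1 := invNum_mul_swap_adj w hik hikadj hc2
        have h2 := IH _ hmeas w1 k j hkj (by rw [hw1k, hw1j]; exact hw) rfl
        rw [← hw2] at h2
        have hMeq : insert k (Finset.univ.filter
              (fun m : Fin n => k < m ∧ m < j ∧ w1 k < w1 m ∧ w1 m < w1 j)) =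
            (Finset.univ.filter
              (fun m : Fin n => i < m ∧ m < j ∧ w i < w m ∧ w m < w j)) := by
          ext m
          simp only [Finset.mem_insert, Finset.mem_filter, Finset.mem_univ, true_and]
          constructor
          · rintro (rfl | ⟨ha, hb, hcc, hdd⟩)
            · exact ⟨hik, hkj, hc2, hc⟩
            · have hmi : m ≠ i := fun h => absurd (h ▸ (hik.trans ha)) (lt_irrefl i)
              have hmk : m ≠ k := ha.ne'
              rw [hw1k, hw1m m hmi hmk] at hcc
              rw [hw1m m hmi hmk, hw1j] at hdd
              exact ⟨hik.trans ha, hb, hcc, hdd⟩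
          · rintro ⟨ha, hb, hcc, hdd⟩
            by_cases hmk : m = k
            · exact Or.inl hmk
            · refine Or.inr ?_
              have hmi : m ≠ i := ha.ne'
              rw [hw1k, hw1m m hmi hmk, hw1j]
              exact ⟨hkm_of m ha hmk, hb, hcc, hdd⟩
        have hknotmem : k ∉ (Finset.univ.filter
            (fun m : Fin n => k < m ∧ m < j ∧ w1 k < w1 m ∧ w1 m < w1 j)) := by
          simp only [Finset.mem_filter, Finset.mem_univ, true_and]
          rintro ⟨h', -⟩
          exact absurd h' (lt_irrefl k)
        have hcard : (Finset.univ.filter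
              (fun m : Fin n => i < m ∧ m < j ∧ w i < w m ∧ w m < w j)).card =
            (Finset.univ.filter
              (fun m : Fin n => k < m ∧ m < j ∧ w1 k < w1 m ∧ w1 m < w1 j)).card + 1 := by
          rw [← hMeq, Finset.card_insert_of_notMem hknotmem]
        have h3 : invNum n (w2 * Equiv.swap i k) = invNum n w2 + 1 := by
          refine invNum_mul_swap_adj w2 hik hikadj ?_
          rw [hw2i, hw2k, hw1i, hw1j]
          exact hc
        rw [hfinal] at h3
        omega
      · -- Case B : w k < w i
        have h1 : invNum n w = invNum n w1 + 1 := invNum_mul_swap_adj' w hik hikadj hc2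
        have h2 := IH _ hmeas w1 k j hkj (by rw [hw1k, hw1j]; exact hw) rfl
        rw [← hw2] at h2
        have hMeq : (Finset.univ.filter
              (fun m : Fin n => k < m ∧ m < j ∧ w1 k < w1 m ∧ w1 m < w1 j)) =
            (Finset.univ.filter
              (fun m : Fin n => i < m ∧ m < j ∧ w i < w m ∧ w m < w j)) := by
          refine Finset.filter_congr ?_
          intro m _
          constructor
          · rintro ⟨ha, hb, hcc, hdd⟩
            have hmi : m ≠ i := fun h => absurd (h ▸ (hik.trans ha)) (lt_irrefl i)
            have hmk : m ≠ k := ha.ne'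
            rw [hw1k, hw1m m hmi hmk] at hcc
            rw [hw1m m hmi hmk, hw1j] at hdd
            exact ⟨hik.trans ha, hb, hcc, hdd⟩
          · rintro ⟨ha, hb, hcc, hdd⟩
            have hmk : m ≠ k := by
              rintro rfl
              exact absurd (hcc.trans hc2) (lt_irrefl _)
            have hmi : m ≠ i := ha.ne'
            rw [hw1k, hw1m m hmi hmk, hw1j]
            exact ⟨hkm_of m ha hmk, hb, hcc, hdd⟩
        rw [hMeq] at h2
        have h3 : invNum n (w2 * Equiv.swap i k) = invNum n w2 + 1 := by
          refine invNum_mul_swap_adj w2 hik hikadj ?_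
          rw [hw2i, hw2k, hw1i, hw1j]
          exact hc
        rw [hfinal] at h3
        omega

lemma invNum_mul_swap (w : Equiv.Perm (Fin n)) {i j : Fin n} (hij : i < j) (hw : w i < w j) :
    invNum n (w * Equiv.swap i j) = invNum n w + 1 +
      2 * (Finset.univ.filter
        (fun k : Fin n => i < k ∧ k < j ∧ w i < w k ∧ w k < w j)).card :=
  invNum_mul_swap_aux (j.val - i.val) w i j hij hw rfl


lemma invNum_lt_mul_swap (w : Equiv.Perm (Fin n)) {i j : Fin n} (hij : i < j)
    (hw : w i < w j) : invNum n w < invNum n (w * Equiv.swap i j) := by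
  rw [invNum_mul_swap w hij hw]; omega

lemma mul_swap_invNum_lt (w : Equiv.Perm (Fin n)) {i j : Fin n} (hij : i < j)
    (hw : w j < w i) : invNum n (w * Equiv.swap i j) < invNum n w := by
  set σ := w * Equiv.swap i j with hσ
  have h1 : σ i = w j := by simp [hσ, Equiv.Perm.mul_apply]
  have h2 : σ j = w i := by simp [hσ, Equiv.Perm.mul_apply]
  have h := invNum_lt_mul_swap σ hij (by rw [h1, h2]; exact hw)
  rwa [hσ, mul_assoc, Equiv.swap_mul_self, mul_one] at h

lemma apply_lt_of_invNum_lt {w : Equiv.Perm (Fin n)} {i j : Fin n} (hij : i < j)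
    (h : invNum n w < invNum n (w * Equiv.swap i j)) : w i < w j := by
  rcases lt_trichotomy (w i) (w j) with h' | h' | h'
  · exact h'
  · exact absurd (w.injective h') hij.ne
  · exact absurd h (not_lt.2 (mul_swap_invNum_lt w hij h').le)

lemma invNum_one : invNum n (1 : Equiv.Perm (Fin n)) = 0 := by
  rw [invNum_eq, Finset.card_eq_zero, invSet]
  refine Finset.filter_eq_empty_iff.2 ?_
  intro p _
  rintro ⟨h1, h2⟩
  simp only [Equiv.Perm.one_apply] at h2
  exact absurd (h1.trans h2) (lt_irrefl _)

lemma strictMono_eq_one {w : Equiv.Perm (Fin n)} (h : StrictMono (w : Fin n → Fin n)) :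
    w = 1 := by
  have key := StrictMono.coe_orderIsoOfSurjective (w : Fin n → Fin n) h w.surjective
  rw [Subsingleton.elim (StrictMono.orderIsoOfSurjective (w : Fin n → Fin n) h w.surjective)
    (OrderIso.refl (Fin n))] at key
  ext x
  have : w x = x := (congrFun key x).symm
  simp [this]

lemma invNum_eq_zero {w : Equiv.Perm (Fin n)} (h : invNum n w = 0) : w = 1 := by
  refine strictMono_eq_one ?_
  intro p q hpq
  rcases lt_trichotomy (w p) (w q) with h' | h' | h'
  · exact h'
  · exact absurd (w.injective h') hpq.ne
  · exfalso
    rw [invNum_eq, Finset.card_eq_zero] at h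
    have : (p, q) ∈ invSet w := mem_invSet.2 ⟨hpq, h'⟩
    rw [h] at this
    exact absurd this (Finset.notMem_empty _)

/-- dichotomy for multiplication by a simple transposition -/
lemma invNum_mul_sTr (w : Equiv.Perm (Fin n)) (a : ℕ) (h : a + 1 < n) :
    (invNum n (w * sTr n a) = invNum n w + 1 ∧
      w ⟨a, Nat.lt_of_succ_lt h⟩ < w ⟨a+1, h⟩) ∨
    (invNum n w = invNum n (w * sTr n a) + 1 ∧
      w ⟨a+1, h⟩ < w ⟨a, Nat.lt_of_succ_lt h⟩) := by
  set i : Fin n := ⟨a, Nat.lt_of_succ_lt h⟩ with hi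
  set j : Fin n := ⟨a+1, h⟩ with hj
  have hij : i < j := by simp [hi, hj, Fin.lt_def]
  have hadj : ∀ k : Fin n, i < k → k < j → False := by
    intro k h1 h2
    have h1' : i.val < k.val := h1
    have h2' : k.val < j.val := h2
    simp [hi, hj] at h1' h2'
    omega
  have hs : sTr n a = Equiv.swap i j := sTr_eq a h
  have hne : w i ≠ w j := fun h' => hij.ne (w.injective h')
  rcases lt_or_gt_of_ne hne with h' | h'
  · left
    rw [hs]
    exact ⟨invNum_mul_swap_adj w hij hadj h', h'⟩
  · right
    rw [hs]
    exact ⟨invNum_mul_swap_adj' w hij hadj h', h'⟩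

lemma invNum_wordProd_le (l : List ℕ) : invNum n (wordProd n l) ≤ l.length := by
  induction l using List.reverseRecOn with
  | nil => simp [wordProd_nil, invNum_one]
  | append_singleton l a IHl =>
    rw [wordProd_concat]
    by_cases h : a + 1 < n
    · rcases invNum_mul_sTr (wordProd n l) a h with ⟨h1, -⟩ | ⟨h1, -⟩ <;>
        simp only [List.length_append, List.length_cons, List.length_nil] <;> omega
    · have : sTr n a = 1 := by simp [sTr, h]
      rw [this, mul_one]
      simp only [List.length_append, List.length_cons, List.length_nil]
      omega

lemma exists_descent {w : Equiv.Perm (Fin n)} (hw : w ≠ 1) :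
    ∃ (a : ℕ) (h : a + 1 < n), w ⟨a+1, h⟩ < w ⟨a, Nat.lt_of_succ_lt h⟩ := by
  by_contra hcon
  push_neg at hcon
  refine hw (strictMono_eq_one ?_)
  have step : ∀ (a : ℕ) (h : a + 1 < n), w ⟨a, Nat.lt_of_succ_lt h⟩ < w ⟨a+1, h⟩ := by
    intro a h
    have h1 := hcon a h
    have h2 : w ⟨a, Nat.lt_of_succ_lt h⟩ ≠ w ⟨a+1, h⟩ := by
      intro h'
      have := w.injective h'
      simp [Fin.ext_iff] at this
    exact h1.lt_of_ne h2
  have main : ∀ (d : ℕ) (p q : Fin n), q.val = p.val + d + 1 → w p < w q := by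
    intro d
    induction d with
    | zero =>
      intro p q hq
      have h : p.val + 1 < n := hq ▸ q.isLt
      have hq' : q = ⟨p.val + 1, h⟩ := Fin.ext (by show q.val = p.val + 1; omega)
      have hmid := step p.val h
      have hp : (⟨p.val, Nat.lt_of_succ_lt h⟩ : Fin n) = p := Fin.ext rfl
      rw [hp] at hmid
      rw [hq']
      exact hmid
    | succ d IHd =>
      intro p q hq
      have h : p.val + 1 < n := by have := q.isLt; omega
      have hmid := step p.val h
      have hp : (⟨p.val, Nat.lt_of_succ_lt h⟩ : Fin n) = p := Fin.ext rfl
      rw [hp] at hmid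
      have htail : w ⟨p.val + 1, h⟩ < w q := IHd ⟨p.val + 1, h⟩ q (by
        show q.val = p.val + 1 + d + 1
        omega)
      exact hmid.trans htail
  intro p q hpq
  have hpq' : p.val < q.val := hpq
  exact main (q.val - p.val - 1) p q (by omega)

lemma exists_word (w : Equiv.Perm (Fin n)) :
    ∃ l, IsWord n l ∧ wordProd n l = w ∧ l.length = invNum n w := by
  generalize hm : invNum n w = m
  induction m using Nat.strong_induction_on generalizing w with
  | _ m IHm =>
  rcases Nat.eq_zero_or_pos m with rfl | hpos
  · have hw1 : w = 1 := invNum_eq_zero hm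
    subst hw1
    exact ⟨[], fun a ha => absurd ha List.not_mem_nil, rfl, by simp [invNum_one] at hm ⊢⟩
  · have hw : w ≠ 1 := by
      rintro rfl
      rw [invNum_one] at hm
      omega
    obtain ⟨a, h, hdes⟩ := exists_descent hw
    have hdec := invNum_mul_sTr w a h
    rcases hdec with ⟨-, habs⟩ | ⟨h1, -⟩
    · exact absurd (habs.trans hdes) (lt_irrefl _)
    · set w' := w * sTr n a with hw'
      have hm' : invNum n w' = m - 1 := by omega
      obtain ⟨l, hl1, hl2, hl3⟩ := IHm (m-1) (by omega) w' hm'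
      refine ⟨l ++ [a], ?_, ?_, ?_⟩
      · intro b hb
        rcases List.mem_append.1 hb with hb | hb
        · exact hl1 b hb
        · rw [List.mem_singleton] at hb
          subst hb; exact h
      · rw [wordProd_concat, hl2, hw', mul_assoc, sTr_mul_self, mul_one]
      · simp only [List.length_append, List.length_cons, List.length_nil]
        omega

lemma len_eq_invNum (w : Equiv.Perm (Fin n)) : len n w = invNum n w := by
  have hmem : invNum n w ∈ {k | ∃ l : List ℕ, IsWord n l ∧ wordProd n l = w ∧ l.length = k} :=
    exists_word w
  apply le_antisymm
  · exact Nat.sInf_le hmem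
  · obtain ⟨l, hl1, hl2, hl3⟩ := Nat.sInf_mem (Set.nonempty_of_mem hmem)
    calc invNum n w = invNum n (wordProd n l) := by rw [hl2]
    _ ≤ l.length := invNum_wordProd_le l
    _ = len n w := hl3

lemma len_le_of_word {l : List ℕ} {w : Equiv.Perm (Fin n)} (h1 : IsWord n l)
    (h2 : wordProd n l = w) : len n w ≤ l.length := by
  have hmem : l.length ∈ {k | ∃ l' : List ℕ, IsWord n l' ∧ wordProd n l' = w ∧ l'.length = k} :=
    ⟨l, h1, h2, rfl⟩
  exact Nat.sInf_le hmem


lemma bruhat_refl (x : Equiv.Perm (Fin n)) : BruhatLE n x x := Relation.ReflTransGen.refl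

lemma bruhat_trans {x y z : Equiv.Perm (Fin n)} (h1 : BruhatLE n x y) (h2 : BruhatLE n y z) :
    BruhatLE n x z := Relation.ReflTransGen.trans h1 h2

lemma bruhat_step {x y : Equiv.Perm (Fin n)} (t : Equiv.Perm (Fin n)) (ht : t.IsSwap)
    (hy : y = x * t) (hlen : len n x < len n y) : BruhatLE n x y :=
  Relation.ReflTransGen.single ⟨hlen, t, ht, hy⟩

lemma len_le_of_bruhat {x y : Equiv.Perm (Fin n)} (h : BruhatLE n x y) :
    len n x ≤ len n y := by
  induction h with
  | refl => exact le_rfl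
  | tail h1 h2 ih => exact ih.trans h2.1.le

lemma bruhat_antisymm {x y : Equiv.Perm (Fin n)} (hxy : BruhatLE n x y)
    (hyx : BruhatLE n y x) : x = y := by
  rcases (Relation.ReflTransGen.cases_head hxy) with rfl | ⟨z, hz, hzy⟩
  · rfl
  · exfalso
    have h1 : len n x < len n z := hz.1
    have h2 : len n z ≤ len n y := len_le_of_bruhat hzy
    have h3 : len n y ≤ len n x := len_le_of_bruhat hyx
    omega

lemma isSwap_conj {t : Equiv.Perm (Fin n)} (ht : t.IsSwap) (σ : Equiv.Perm (Fin n)) :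
    (σ * t * σ⁻¹).IsSwap := by
  obtain ⟨p, q, hpq, rfl⟩ := ht
  refine ⟨σ p, σ q, fun h => hpq (σ.injective h), ?_⟩
  exact (Equiv.swap_apply_apply σ p q).symm

lemma sTr_isSwap (a : ℕ) (h : a + 1 < n) : (sTr n a).IsSwap := by
  rw [sTr_eq a h]
  exact ⟨_, _, by simp [Fin.ext_iff], rfl⟩

lemma sTr_inv (a : ℕ) : (sTr n a)⁻¹ = sTr n a :=
  inv_eq_of_mul_eq_one_right (sTr_mul_self a)

/-- the two Fin points of `sTr n a` -/
lemma sTr_lt_succ (a : ℕ) (h : a + 1 < n) :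
    (⟨a, Nat.lt_of_succ_lt h⟩ : Fin n) < ⟨a+1, h⟩ := by
  simp [Fin.lt_def]

/-- The one-step lifting property. -/
lemma bruhat_edge_lift {x w : Equiv.Perm (Fin n)} (a : ℕ) (ha : a + 1 < n)
    (hlen : len n x < len n w) (t : Equiv.Perm (Fin n)) (ht : t.IsSwap) (hw : w = x * t) :
    (BruhatLE n (x * sTr n a) w ∨ BruhatLE n (x * sTr n a) (w * sTr n a)) ∧
    (BruhatLE n x (w * sTr n a) ∨ BruhatLE n (x * sTr n a) (w * sTr n a)) := by
  subst hw
  -- normalize t = swap i j with i < j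
  obtain ⟨p, q, hpq, rfl⟩ := ht
  obtain ⟨i, j, hij, hswap⟩ : ∃ i j : Fin n, i < j ∧ Equiv.swap p q = Equiv.swap i j := by
    rcases lt_or_gt_of_ne hpq with h | h
    · exact ⟨p, q, h, rfl⟩
    · exact ⟨q, p, h, Equiv.swap_comm p q⟩
  rw [hswap] at hlen ⊢
  clear hswap hpq
  set s := sTr n a with hs
  set i0 : Fin n := ⟨a, Nat.lt_of_succ_lt ha⟩ with hi0
  set j0 : Fin n := ⟨a+1, ha⟩ with hj0
  have hi0j0 : i0 < j0 := sTr_lt_succ a ha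
  have hseq : s = Equiv.swap i0 j0 := sTr_eq a ha
  have hss : s * s = 1 := sTr_mul_self a
  have hsswap : s.IsSwap := sTr_isSwap a ha
  have hsinv : s⁻¹ = s := sTr_inv a
  have hconjswap : (s * Equiv.swap i j * s).IsSwap := by
    have := isSwap_conj (⟨i, j, hij.ne, rfl⟩ : (Equiv.swap i j).IsSwap) s
    rwa [hsinv] at this
  simp only [len_eq_invNum] at hlen ⊢
  have hxij : x i < x j := apply_lt_of_invNum_lt hij hlen
  have hG := invNum_mul_swap x hij hxij
  -- abbreviations
  set W := x * Equiv.swap i j with hW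
  have hconjx : W * s = (x * s) * (s * Equiv.swap i j * s) := by
    rw [hW]
    calc x * Equiv.swap i j * s = x * (s * s) * Equiv.swap i j * s := by rw [hss, mul_one]
    _ = (x * s) * (s * Equiv.swap i j * s) := by simp only [mul_assoc]
  have hWm : ∀ m : Fin n, m ≠ i → m ≠ j → W m = x m := by
    intro m h1 h2
    simp [hW, Equiv.Perm.mul_apply, Equiv.swap_apply_of_ne_of_ne h1 h2]
  have hWi : W i = x j := by simp [hW, Equiv.Perm.mul_apply]
  have hWj : W j = x i := by simp [hW, Equiv.Perm.mul_apply]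
  -- dichotomies
  have hxd := invNum_mul_sTr x a ha
  have hWd := invNum_mul_sTr W a ha
  rw [← hs, ← hi0, ← hj0] at hxd hWd
  -- helper: the step lemma in invNum form
  have step : ∀ (u v t' : Equiv.Perm (Fin n)), t'.IsSwap → v = u * t' →
      invNum n u < invNum n v → BruhatLE n u v := by
    intro u v t' h1 h2 h3
    exact bruhat_step t' h1 h2 (by simpa only [len_eq_invNum] using h3)
  rcases hWd with ⟨hws, hWlt⟩ | ⟨hws, hWgt⟩
  · -- Case A : length of W goes up with s
    have hmain : BruhatLE n (x * s) (W * s) := by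
      refine step _ _ _ hconjswap hconjx ?_
      have hxs_le : invNum n (x * s) ≤ invNum n x + 1 := by
        rcases hxd with ⟨h1, -⟩ | ⟨h1, -⟩ <;> omega
      omega
    exact ⟨Or.inr hmain, Or.inr hmain⟩
  · -- Case B : length of W goes down with s
    rcases hxd with ⟨hxs, hxlt⟩ | ⟨hxs, hxgt⟩
    · -- B2 : x goes up
      by_cases h2 : invNum n (x * s) < invNum n (W * s)
      · have hmain : BruhatLE n (x * s) (W * s) := step _ _ _ hconjswap hconjx h2
        exact ⟨Or.inr hmain, Or.inr hmain⟩
      · -- hard case: lengths force t = s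
        have hle : invNum n (W * s) ≤ invNum n (x * s) := not_lt.1 h2
        have hM0 : (Finset.univ.filter
            (fun m : Fin n => i < m ∧ m < j ∧ x i < x m ∧ x m < x j)).card = 0 := by omega
        have hnomid : ∀ m : Fin n, i < m → m < j → x i < x m → x m < x j → False := by
          intro m h1' h2' h3' h4'
          have hmem : m ∈ Finset.univ.filter
              (fun m : Fin n => i < m ∧ m < j ∧ x i < x m ∧ x m < x j) :=
            Finset.mem_filter.2 ⟨Finset.mem_univ m, h1', h2', h3', h4'⟩
          rw [Finset.card_eq_zero.1 hM0] at hmem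
          exact absurd hmem (Finset.notMem_empty m)
        have hijv : i.val < j.val := hij
        have hi0v : i0.val = a := rfl
        have hj0v : j0.val = a + 1 := rfl
        by_cases hi0i : i0 = i
        · by_cases hj0j : j0 = j
          · -- t = s
            have hts : Equiv.swap i j = s := by rw [← hi0i, ← hj0j, hseq]
            have hxsW : x * s = W := by rw [hW, hts]
            have hWsx : W * s = x := by rw [hW, hts, mul_assoc, hss, mul_one]
            rw [hxsW, hWsx]
            exact ⟨Or.inl (bruhat_refl W), Or.inl (bruhat_refl x)⟩
          · exfalso
            have e1 : i0.val = i.val := congrArg Fin.val hi0i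
            have e2 : j.val ≠ j0.val := fun h' => hj0j (Fin.ext h'.symm)
            have hj0i : j0 ≠ i := by
              intro h'
              have := congrArg Fin.val h'
              omega
            have hWj0 : W j0 = x j0 := hWm j0 hj0i hj0j
            have hWi0 : W i0 = x j := by rw [hi0i]; exact hWi
            have hij0 : i < j0 := by rw [← hi0i]; exact hi0j0
            have hj0j' : j0 < j := by rw [Fin.lt_def]; omega
            have hc1 : x i < x j0 := by rw [← hi0i]; exact hxlt
            have hc2 : x j0 < x j := by rw [← hWj0, ← hWi0]; exact hWgt
            exact hnomid j0 hij0 hj0j' hc1 hc2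
        · by_cases hi0j : i0 = j
          · exfalso
            have e1 : i0.val = j.val := congrArg Fin.val hi0j
            have hj0i : j0 ≠ i := by
              intro h'
              have := congrArg Fin.val h'
              omega
            have hj0j : j0 ≠ j := by
              intro h'
              have := congrArg Fin.val h'
              omega
            have hWj0 : W j0 = x j0 := hWm j0 hj0i hj0j
            have hWi0 : W i0 = x i := by rw [hi0j]; exact hWj
            have hc1 : x j < x j0 := by rw [← hi0j]; exact hxlt
            have hc2 : x j0 < x i := by rw [← hWj0, ← hWi0]; exact hWgt
            exact absurd ((hxij.trans hc1).trans hc2) (lt_irrefl _)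
          · by_cases hj0i : j0 = i
            · exfalso
              have hi0i' : i0 ≠ i := hi0i
              have e1 : j0.val = i.val := congrArg Fin.val hj0i
              have hi0j' : i0 ≠ j := hi0j
              have hWi0 : W i0 = x i0 := hWm i0 hi0i hi0j
              have hWj0 : W j0 = x j := by rw [hj0i]; exact hWi
              have hc1 : x i0 < x i := by
                have := hxlt
                rw [hj0i] at this
                exact this
              have hc2 : x j < x i0 := by rw [← hWi0, ← hWj0]; exact hWgt
              exact absurd ((hc1.trans hxij).trans hc2) (lt_irrefl _)
            · by_cases hj0j : j0 = j
              · exfalso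
                have e1 : j0.val = j.val := congrArg Fin.val hj0j
                have e2 : i0.val ≠ i.val := fun h' => hi0i (Fin.ext h')
                have hii0 : i < i0 := by rw [Fin.lt_def]; omega
                have hi0j' : i0 < j := by rw [Fin.lt_def]; omega
                have hWi0 : W i0 = x i0 := hWm i0 hi0i hi0j
                have hWj0 : W j0 = x i := by rw [hj0j]; exact hWj
                have hc1 : x i < x i0 := by rw [← hWj0, ← hWi0]; exact hWgt
                have hc2 : x i0 < x j := by rw [← hj0j]; exact hxlt
                exact hnomid i0 hii0 hi0j' hc1 hc2
              · exfalso
                have hWi0 : W i0 = x i0 := hWm i0 hi0i hi0j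
                have hWj0 : W j0 = x j0 := hWm j0 hj0i hj0j
                have hc2 : x j0 < x i0 := by rw [← hWi0, ← hWj0]; exact hWgt
                exact absurd (hxlt.trans hc2) (lt_irrefl _)
    · -- B1 : x goes down
      constructor
      · refine Or.inl (bruhat_trans (y := x) ?_ ?_)
        · exact step (x * s) x s hsswap (by rw [mul_assoc, hss, mul_one]) (by omega)
        · exact step x W _ ⟨i, j, hij.ne, rfl⟩ hW hlen
      · refine Or.inr ?_
        refine step _ _ _ hconjswap hconjx ?_
        omega


/-- The lifting property along a Bruhat chain. -/
lemma bruhat_lift {x w : Equiv.Perm (Fin n)} (a : ℕ) (ha : a + 1 < n) (h : BruhatLE n x w) :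
    (BruhatLE n (x * sTr n a) w ∨ BruhatLE n (x * sTr n a) (w * sTr n a)) ∧
    (BruhatLE n x (w * sTr n a) ∨ BruhatLE n (x * sTr n a) (w * sTr n a)) := by
  induction h using Relation.ReflTransGen.head_induction_on with
  | refl => exact ⟨Or.inr (bruhat_refl _), Or.inr (bruhat_refl _)⟩
  | head hedge hchain IH =>
    obtain ⟨hlen, t, ht, hyx⟩ := hedge
    rename_i x' y'
    have hedge_lift := bruhat_edge_lift a ha hlen t ht hyx
    have hxy : BruhatLE n x' y' := bruhat_step t ht hyx hlen
    have hychain : BruhatLE n y' w := hchain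
    constructor
    · rcases hedge_lift.1 with h1 | h1
      · rcases IH.1 with h2 | h2
        · exact Or.inl (bruhat_trans h1 hychain)
        · exact Or.inl (bruhat_trans h1 hychain)
      · rcases IH.1 with h2 | h2
        · exact Or.inl (bruhat_trans h1 h2)
        · exact Or.inr (bruhat_trans h1 h2)
    · rcases IH.2 with h2 | h2
      · exact Or.inl (bruhat_trans hxy h2)
      · rcases hedge_lift.2 with h1 | h1
        · exact Or.inl (bruhat_trans h1 h2)
        · exact Or.inr (bruhat_trans h1 h2)

lemma len_mul_sTr_cases (w : Equiv.Perm (Fin n)) (a : ℕ) (h : a + 1 < n) :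
    len n (w * sTr n a) = len n w + 1 ∨ len n w = len n (w * sTr n a) + 1 := by
  rcases invNum_mul_sTr w a h with ⟨h1, -⟩ | ⟨h1, -⟩
  · left; simp only [len_eq_invNum]; exact h1
  · right; simp only [len_eq_invNum]; exact h1

lemma bruhat_lift_up {x v : Equiv.Perm (Fin n)} (a : ℕ) (ha : a + 1 < n)
    (h : BruhatLE n x v) (hv : len n (v * sTr n a) = len n v + 1) :
    BruhatLE n (x * sTr n a) (v * sTr n a) := by
  rcases (bruhat_lift a ha h).1 with h1 | h1
  · exact bruhat_trans h1 (bruhat_step (sTr n a) (sTr_isSwap a ha) rfl (by omega))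
  · exact h1

lemma bruhat_mul_sTr_le {x v : Equiv.Perm (Fin n)} (a : ℕ) (ha : a + 1 < n)
    (h : BruhatLE n x v) (hv : len n v = len n (v * sTr n a) + 1) :
    BruhatLE n (x * sTr n a) v := by
  rcases (bruhat_lift a ha h).1 with h1 | h1
  · exact h1
  · refine bruhat_trans h1 (bruhat_step (sTr n a) (sTr_isSwap a ha) ?_ (by omega))
    rw [mul_assoc, sTr_mul_self, mul_one]

lemma demStep_def (u : Equiv.Perm (Fin n)) (a : ℕ) :
    demStep n u a = if len n (u * sTr n a) = len n u + 1 then u * sTr n a else u := rfl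

lemma demStep_le (u : Equiv.Perm (Fin n)) (a : ℕ) (ha : a + 1 < n) :
    BruhatLE n u (demStep n u a) := by
  rw [demStep_def]
  split_ifs with h
  · exact bruhat_step (sTr n a) (sTr_isSwap a ha) rfl (by omega)
  · exact bruhat_refl u

lemma demStep_mono_mul {y z : Equiv.Perm (Fin n)} (a : ℕ) (ha : a + 1 < n)
    (h : BruhatLE n y z) : BruhatLE n (y * sTr n a) (demStep n z a) := by
  rw [demStep_def]
  split_ifs with hcond
  · exact bruhat_lift_up a ha h hcond
  · rcases len_mul_sTr_cases z a ha with h1 | h1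
    · exact absurd h1 hcond
    · exact bruhat_mul_sTr_le a ha h h1

lemma isReducedWord_length {l : List ℕ} {w : Equiv.Perm (Fin n)}
    (h : IsReducedWord n l w) : l.length = len n w := by
  obtain ⟨h1, h2, h3⟩ := h
  refine le_antisymm ?_ (len_le_of_word h1 h2)
  obtain ⟨l0, g1, g2, g3⟩ := exists_word w
  have := h3 l0 g1 g2
  rw [len_eq_invNum]
  omega

lemma reduced_prefix {l : List ℕ} {a : ℕ} {w : Equiv.Perm (Fin n)}
    (h : IsReducedWord n (l ++ [a]) w) :
    IsReducedWord n l (wordProd n l) ∧ len n w = len n (wordProd n l) + 1 ∧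
      w = wordProd n l * sTr n a := by
  obtain ⟨h1, h2, h3⟩ := h
  have hword : IsWord n l := fun b hb => h1 b (List.mem_append.2 (Or.inl hb))
  have hw0 : w = wordProd n l * sTr n a := by rw [← h2, wordProd_concat]
  have hlenw : (l ++ [a]).length = len n w := isReducedWord_length ⟨h1, h2, h3⟩
  simp only [List.length_append, List.length_cons, List.length_nil] at hlenw
  have hle1 : len n (wordProd n l) ≤ l.length := len_le_of_word hword rfl
  have hle2 : len n w ≤ len n (wordProd n l) + 1 := by
    obtain ⟨l0, g1, g2, g3⟩ := exists_word (wordProd n l)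
    have : wordProd n (l0 ++ [a]) = w := by rw [wordProd_concat, g2, hw0]
    have hword' : IsWord n (l0 ++ [a]) := by
      intro b hb
      rcases List.mem_append.1 hb with hb | hb
      · exact g1 b hb
      · rw [List.mem_singleton] at hb
        rw [hb]
        exact h1 a (List.mem_append.2 (Or.inr (List.mem_singleton.2 rfl)))
    have := len_le_of_word hword' this
    simp only [List.length_append, List.length_cons, List.length_nil] at this
    simp only [len_eq_invNum] at this ⊢
    omega
  have hlen0 : len n (wordProd n l) = l.length := by omega
  refine ⟨⟨hword, rfl, ?_⟩, by omega, hw0⟩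
  intro l' hl' hp'
  have := len_le_of_word hl' hp'
  omega

/-- Main specification of the Demazure fold over a reduced word. -/
lemma dem_fold_spec : ∀ (l : List ℕ) (v u : Equiv.Perm (Fin n)), IsReducedWord n l v →
    (∃ x, BruhatLE n x v ∧ List.foldl (demStep n) u l = u * x) ∧
    (∀ y z, BruhatLE n y u → BruhatLE n z v →
      BruhatLE n (y * z) (List.foldl (demStep n) u l)) := by
  intro l
  induction l using List.reverseRecOn with
  | nil =>
    intro v u hred
    have hv : v = 1 := by rw [← hred.2.1]; rfl
    subst hv
    constructor
    · exact ⟨1, bruhat_refl 1, by rw [mul_one]; rfl⟩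
    · intro y z hy hz
      have hz1 : z = 1 := by
        have h1 : len n z ≤ len n 1 := len_le_of_bruhat hz
        rw [len_eq_invNum, len_eq_invNum, invNum_one] at h1
        exact invNum_eq_zero (by omega)
      subst hz1
      simpa [mul_one] using hy
  | append_singleton l a IH =>
    intro v u hred
    have ha : a + 1 < n :=
      hred.1 a (List.mem_append.2 (Or.inr (List.mem_singleton.2 rfl)))
    obtain ⟨hred0, hlen0, hveq⟩ := reduced_prefix hred
    obtain ⟨⟨x0, hx0v, hx0eq⟩, hub⟩ := IH (wordProd n l) u hred0
    rw [List.foldl_append]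
    simp only [List.foldl_cons, List.foldl_nil]
    set v0 := wordProd n l with hv0
    set z0 := List.foldl (demStep n) u l with hz0
    have hv0v : BruhatLE n v0 v :=
      bruhat_step (sTr n a) (sTr_isSwap a ha) hveq (by omega)
    have hlup : len n (v0 * sTr n a) = len n v0 + 1 := by rw [← hveq]; omega
    constructor
    · rw [demStep_def]
      split_ifs with hcond
      · refine ⟨x0 * sTr n a, ?_, by rw [hx0eq, mul_assoc]⟩
        rw [hveq]
        exact bruhat_lift_up a ha hx0v hlup
      · exact ⟨x0, bruhat_trans hx0v hv0v, hx0eq⟩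
    · intro y z hy hz
      have hvv0 : v * sTr n a = v0 := by rw [hveq, mul_assoc, sTr_mul_self, mul_one]
      have hdisj := (bruhat_lift a ha hz).2
      rw [hvv0] at hdisj
      rcases hdisj with hzc | hzc
      · exact bruhat_trans (hub y z hy hzc) (demStep_le z0 a ha)
      · have h1 : BruhatLE n (y * (z * sTr n a)) z0 := hub y _ hy hzc
        have h2 := demStep_mono_mul a ha h1
        have h3 : (y * (z * sTr n a)) * sTr n a = y * z := by
          rw [mul_assoc, mul_assoc, sTr_mul_self, mul_one]
        rwa [h3] at h2

lemma dem_fold_one {l : List ℕ} {v : Equiv.Perm (Fin n)} (h : IsReducedWord n l v) :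
    List.foldl (demStep n) 1 l = v := by
  obtain ⟨⟨x, hxv, hxeq⟩, hub⟩ := dem_fold_spec l v 1 h
  have h1 : BruhatLE n v (List.foldl (demStep n) 1 l) := by
    have := hub 1 v (bruhat_refl 1) (bruhat_refl v)
    rwa [one_mul] at this
  have h2 : BruhatLE n (List.foldl (demStep n) 1 l) v := by
    rw [hxeq, one_mul]; exact hxv
  exact bruhat_antisymm h2 h1

lemma exists_reduced (w : Equiv.Perm (Fin n)) : ∃ l, IsReducedWord n l w := by
  obtain ⟨l, h1, h2, h3⟩ := exists_word w
  refine ⟨l, h1, h2, fun l' hl' hp' => ?_⟩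
  have := len_le_of_word hl' hp'
  rw [len_eq_invNum] at this
  omega

lemma redWord_reduced (w : Equiv.Perm (Fin n)) : IsReducedWord n (redWord n w) w := by
  unfold redWord
  rw [dif_pos (exists_reduced w)]
  exact (exists_reduced w).choose_spec

lemma invNum_inv (w : Equiv.Perm (Fin n)) : invNum n w⁻¹ = invNum n w := by
  rw [invNum_eq, invNum_eq]
  refine (Finset.card_nbij' (fun p : Fin n × Fin n => (w p.2, w p.1))
    (fun p : Fin n × Fin n => (w⁻¹ p.2, w⁻¹ p.1)) ?_ ?_ ?_ ?_).symm
  · intro p hp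
    obtain ⟨h1, h2⟩ := mem_invSet.1 hp
    refine mem_invSet.2 ⟨h2, ?_⟩
    simp only [← Equiv.Perm.mul_apply, inv_mul_cancel, Equiv.Perm.one_apply]
    exact h1
  · intro p hp
    obtain ⟨h1, h2⟩ := mem_invSet.1 hp
    refine mem_invSet.2 ⟨h2, ?_⟩
    simp only [← Equiv.Perm.mul_apply, mul_inv_cancel, Equiv.Perm.one_apply]
    exact h1
  · intro p _
    simp
  · intro p _
    simp

lemma len_inv (w : Equiv.Perm (Fin n)) : len n w⁻¹ = len n w := by
  rw [len_eq_invNum, len_eq_invNum, invNum_inv]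

lemma swap_self_inv {t : Equiv.Perm (Fin n)} (ht : t.IsSwap) : t⁻¹ = t := by
  obtain ⟨p, q, hpq, rfl⟩ := ht
  exact Equiv.swap_inv p q

lemma bruhat_inv {x y : Equiv.Perm (Fin n)} (h : BruhatLE n x y) :
    BruhatLE n x⁻¹ y⁻¹ := by
  induction h with
  | refl => exact bruhat_refl _
  | tail h1 h2 ih =>
    rename_i b c
    obtain ⟨hl, t, ht, rfl⟩ := h2
    refine bruhat_trans ih (bruhat_step (b * t * b⁻¹) (isSwap_conj ht b) ?_ ?_)
    · rw [mul_inv_rev, swap_self_inv ht]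
      group
    · rw [len_inv, len_inv]
      exact hl

end DemMono

/-- If `v ≤ w` and `v' ≤ w'` in Bruhat order then `v' ∘ v ≤ w' ∘ w` for the Demazure
product; in particular `v ≤ w` implies `v⁻¹ ∘ v ≤ w⁻¹ ∘ w`. -/
theorem dem_mono_bruhat (n : ℕ) :
    (∀ v v' w w' : Equiv.Perm (Fin n), BruhatLE n v w → BruhatLE n v' w' →
      BruhatLE n (dem n v' v) (dem n w' w)) ∧
    (∀ v w : Equiv.Perm (Fin n), BruhatLE n v w →
      BruhatLE n (dem n v⁻¹ v) (dem n w⁻¹ w)) := by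
  have main : ∀ v v' w w' : Equiv.Perm (Fin n), BruhatLE n v w → BruhatLE n v' w' →
      BruhatLE n (dem n v' v) (dem n w' w) := by
    intro v v' w w' hvw hv'w'
    have hfold : ∀ (p q : Equiv.Perm (Fin n)), dem n p q =
        List.foldl (demStep n) p (redWord n q) := by
      intro p q
      rw [dem, demWord, List.foldl_append, DemMono.dem_fold_one (DemMono.redWord_reduced p)]
    obtain ⟨⟨x0, hx0, hxeq⟩, -⟩ :=
      DemMono.dem_fold_spec (redWord n v) v v' (DemMono.redWord_reduced v)
    obtain ⟨-, hub⟩ :=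
      DemMono.dem_fold_spec (redWord n w) w w' (DemMono.redWord_reduced w)
    rw [hfold v' v, hfold w' w, hxeq]
    exact hub v' x0 hv'w' (DemMono.bruhat_trans hx0 hvw)
  exact ⟨main, fun v w h => main v v⁻¹ w w⁻¹ h (DemMono.bruhat_inv h)⟩
end
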